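/- arXiv:1906.08383 — 7 statements merged into one kernel-verified Lean document; each statement's English description precedes it below -/
import Mathlib

section
/- In the abstract stochastic gradient ascent setting, assume additionally that J is bounded (|J(θ)| ≤ B for all θ) and that the stepsizes satisfy the Robbins–Monro conditions α_k > 0, ∑_{k=0}^∞ α_k = ∞ and ∑_{k=0}^∞ α_k² < ∞. Then ‖∇J(θ_k)‖ → 0 almost surely as k → ∞; consequently, every almost-sure limit point of the iterate sequence (θ_k) is a stationary point of J. -/
/-!
The descent lemma gives `J θₖ₊₁ ≥ J θₖ + αₖ ⟪∇J θₖ, gₖ⟫ - L ℓ² αₖ²`. Taking expectations and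
using unbiasedness, `E J θₖ₊₁ ≥ E J θₖ + αₖ E ‖∇J θₖ‖² - L ℓ² αₖ²`; since `J` is bounded and
`∑ αₖ² < ∞`, this telescopes to `E ∑ αₖ ‖∇J θₖ‖² < ∞`, so `∑ αₖ ‖∇J θₖ‖² < ∞` almost surely.
Along such a path `‖∇J θₖ‖` moves by at most `L ℓ αₖ` per step, which together with
`∑ αₖ = ∞` forces `‖∇J θₖ‖ → 0`; continuity of `∇J` then makes every cluster point stationary.
-/

open MeasureTheory Filter Topology Finset RealInnerProductSpace

section Smooth

variable {F : Type*} [NormedAddCommGroup F] [InnerProductSpace ℝ F] [CompleteSpace F]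
  {J : F → ℝ} {L : ℝ}

theorem abs_sub_sub_inner_gradient_le (hL : 0 ≤ L) (hJ : Differentiable ℝ J)
    (hJL : ∀ x y, ‖gradient J x - gradient J y‖ ≤ L * ‖x - y‖) (x y : F) :
    |J y - J x - ⟪gradient J x, y - x⟫| ≤ L * ‖y - x‖ ^ 2 := by
  have hfderiv : ∀ z, fderiv ℝ J z = InnerProductSpace.toDual ℝ F (gradient J z) := by
    simp [gradient]
  have hbound : ∀ z ∈ segment ℝ x y, ‖fderiv ℝ J z - fderiv ℝ J x‖ ≤ L * ‖y - x‖ := by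
    intro z hz
    rw [hfderiv, hfderiv, ← map_sub, LinearIsometryEquiv.norm_map]
    exact (hJL z x).trans (mul_le_mul_of_nonneg_left (norm_sub_le_of_mem_segment hz) hL)
  have := (convex_segment x y).norm_image_sub_le_of_norm_fderiv_le' (fun z _ => hJ z) hbound
    (left_mem_segment ℝ x y) (right_mem_segment ℝ x y)
  rw [hfderiv, InnerProductSpace.toDual_apply_apply, Real.norm_eq_abs] at this
  linarith

theorem lipschitzWith_gradient (hL : 0 ≤ L)
    (hJL : ∀ x y, ‖gradient J x - gradient J y‖ ≤ L * ‖x - y‖) :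
    LipschitzWith L.toNNReal (gradient J) :=
  .of_dist_le_mul fun x y => by simpa [dist_eq_norm, Real.coe_toNNReal _ hL] using hJL x y

theorem le_comp_add_smul_of_norm_le {ℓ : ℝ} (hL : 0 ≤ L) (hJ : Differentiable ℝ J)
    (hJL : ∀ x y, ‖gradient J x - gradient J y‖ ≤ L * ‖x - y‖) (x : F) {v : F} (hv : ‖v‖ ≤ ℓ)
    (a : ℝ) :
    J x + a * ⟪gradient J x, v⟫ - L * ℓ ^ 2 * a ^ 2 ≤ J (x + a • v) := by
  have hdesc := (abs_le.1 (abs_sub_sub_inner_gradient_le hL hJ hJL x (x + a • v))).1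
  rw [add_sub_cancel_left, real_inner_smul_right, norm_smul, mul_pow, Real.norm_eq_abs,
    sq_abs] at hdesc
  have hstep : L * (a ^ 2 * ‖v‖ ^ 2) ≤ L * ℓ ^ 2 * a ^ 2 := by
    rw [mul_comm (a ^ 2), ← mul_assoc]
    gcongr
  linarith

theorem norm_gradient_sq_le_of_abs_le {B : ℝ} (hL : 0 < L) (hJ : Differentiable ℝ J)
    (hJL : ∀ x y, ‖gradient J x - gradient J y‖ ≤ L * ‖x - y‖) (hJB : ∀ x, |J x| ≤ B) (x : F) :
    ‖gradient J x‖ ^ 2 ≤ 8 * L * B := by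
  -- a step `(2L)⁻¹` along the gradient gains at least `‖∇J x‖² / (4L)`,
  -- while `J` varies by at most `2B`
  set y := x + (2 * L)⁻¹ • gradient J x
  have hascent := (abs_le.1 (abs_sub_sub_inner_gradient_le hL.le hJ hJL x y)).1
  have hgain : ⟪gradient J x, y - x⟫ - L * ‖y - x‖ ^ 2 = ‖gradient J x‖ ^ 2 / (4 * L) := by
    rw [add_sub_cancel_left, real_inner_smul_right, real_inner_self_eq_norm_sq, norm_smul,
      Real.norm_of_nonneg (by positivity)]
    field_simp
    ring
  have hvar : J y - J x ≤ 2 * B := by linarith [(abs_le.1 (hJB x)).1, (abs_le.1 (hJB y)).2]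
  have : ‖gradient J x‖ ^ 2 / (4 * L) ≤ 2 * B := by linarith
  rwa [div_le_iff₀ (by positivity), show 2 * B * (4 * L) = 8 * L * B by ring] at this

end Smooth

theorem eq_of_mapClusterPt_of_tendsto {α X : Type*} [TopologicalSpace X] [T2Space X]
    {u : α → X} {F : Filter α} {x y : X} (hx : MapClusterPt x F u) (hu : Tendsto u F (𝓝 y)) :
    x = y := by
  by_contra h
  exact (hx.clusterPt.mono hu).neBot.ne (disjoint_nhds_nhds.2 h).eq_bot

section Sequences

variable {a α : ℕ → ℝ}

theorem frequently_lt_of_summable_mul_sq (hα : ∀ k, 0 ≤ α k)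
    (hdiv : Tendsto (fun n => ∑ k ∈ range n, α k) atTop atTop)
    (hsum : Summable fun k => α k * a k ^ 2) {ε : ℝ} (hε : 0 < ε) :
    ∃ᶠ k in atTop, a k < ε := by
  by_contra h
  simp only [not_frequently, not_lt] at h
  refine (not_summable_iff_tendsto_nat_atTop_of_nonneg hα).2 hdiv ?_
  refine (summable_mul_left_iff (pow_ne_zero 2 hε.ne')).1 (hsum.of_norm_bounded_eventually_nat ?_)
  filter_upwards [h] with k hk
  rw [Real.norm_of_nonneg (mul_nonneg (by positivity) (hα k)), mul_comm]
  gcongr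
  exact hα k

theorem sub_le_mul_sum_Ico_of_abs_sub_le {C : ℝ} (hstep : ∀ k, |a (k + 1) - a k| ≤ C * α k)
    {n m : ℕ} (hnm : n ≤ m) :
    a n - a m ≤ C * ∑ k ∈ Ico n m, α k := by
  induction m, hnm using Nat.le_induction with
  | base => simp
  | succ m hnm ih =>
    rw [sum_Ico_succ_top hnm, mul_add]
    linarith [(abs_le.1 (hstep m)).1]

theorem tendsto_zero_of_summable_mul_sq {C : ℝ} (hC : 0 < C)
    (ha : ∀ k, 0 ≤ a k) (hα : ∀ k, 0 ≤ α k)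
    (hdiv : Tendsto (fun n => ∑ k ∈ range n, α k) atTop atTop)
    (hsum : Summable fun k => α k * a k ^ 2)
    (hstep : ∀ k, |a (k + 1) - a k| ≤ C * α k) :
    Tendsto a atTop (𝓝 0) := by
  rw [Metric.tendsto_atTop]
  intro ε hε
  set δ := (ε / 2) ^ 2 * (ε / 2 / C)
  obtain ⟨N, hN⟩ := hsum.nat_tsum_vanishing (Metric.ball_mem_nhds 0 (by positivity : 0 < δ))
  have htail : ∀ n m, N ≤ n → ∑ k ∈ Ico n m, α k * a k ^ 2 < δ := by
    intro n m hn
    have := hN (Ico n m : Set ℕ) fun k hk => hn.trans (mem_Ico.1 hk).1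
    rw [Finset.tsum_subtype' (Ico n m) fun k => α k * a k ^ 2, mem_ball_zero_iff,
      Real.norm_eq_abs] at this
    exact (le_abs_self _).trans_lt this
  refine ⟨N, fun n hn => ?_⟩
  rw [Real.dist_eq, sub_zero, abs_of_nonneg (ha n)]
  by_contra! hεn
  -- starting from `a n ≥ ε`, the sequence cannot drop below `ε / 2` before the tail sum exceeds `δ`
  have hstay : ∀ m, n ≤ m → ∀ j, n ≤ j → j < m → ε / 2 ≤ a j := by
    intro m hnm
    induction m, hnm using Nat.le_induction with
    | base => intro j hj hjn; omega
    | succ m hnm ih =>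
      intro j hj hjm
      rcases Nat.lt_succ_iff_lt_or_eq.1 hjm with hjm | rfl
      · exact ih j hj hjm
      have hsq : (ε / 2) ^ 2 * ∑ k ∈ Ico n j, α k < δ := by
        refine lt_of_le_of_lt ?_ (htail n j hn)
        rw [mul_sum]
        refine sum_le_sum fun k hk => ?_
        rw [mul_comm]
        have := ih k (mem_Ico.1 hk).1 (mem_Ico.1 hk).2
        gcongr
        exact hα k
      have hCS : C * ∑ k ∈ Ico n j, α k < ε / 2 :=
        (lt_div_iff₀' hC).1 (lt_of_mul_lt_mul_left hsq (by positivity))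
      linarith [sub_le_mul_sum_Ico_of_abs_sub_le hstep hnm]
  obtain ⟨j, hjε, hj⟩ :=
    ((frequently_lt_of_summable_mul_sq hα hdiv hsum (half_pos hε)).and_eventually
      (eventually_ge_atTop n)).exists
  exact hjε.not_ge (hstay (j + 1) (by omega) j hj j.lt_succ_self)

end Sequences

section Stochastic

variable {F : Type*} [NormedAddCommGroup F] [InnerProductSpace ℝ F] [CompleteSpace F]
  {Ω : Type*} {m mΩ : MeasurableSpace Ω} {μ : Measure Ω}

theorem integral_inner_eq_integral_norm_sq_of_condExp_eq [IsFiniteMeasure μ] (hm : m ≤ mΩ)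
    {G g : Ω → F} (hG : StronglyMeasurable[m] G) (hGg : Integrable (fun ω => ⟪G ω, g ω⟫) μ)
    (hg : Integrable g μ) (hcond : μ[g|m] =ᵐ[μ] G) :
    ∫ ω, ⟪G ω, g ω⟫ ∂μ = ∫ ω, ‖G ω‖ ^ 2 ∂μ := by
  rw [← integral_condExp hm]
  refine integral_congr_ae ?_
  filter_upwards [condExp_bilin_of_stronglyMeasurable_left (innerSL ℝ) hG hGg hg, hcond]
    with ω hpull hω
  exact hpull.trans (by rw [hω]; exact real_inner_self_eq_norm_sq _)

theorem ae_summable_of_sum_integral_le {f : ℕ → Ω → ℝ} (hf0 : ∀ k ω, 0 ≤ f k ω)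
    (hf : ∀ k, Integrable (f k) μ) {C : ℝ} (hC : ∀ n, ∑ k ∈ range n, ∫ ω, f k ω ∂μ ≤ C) :
    ∀ᵐ ω ∂μ, Summable fun k => f k ω := by
  have hmeas : ∀ k, AEMeasurable (fun ω => ENNReal.ofReal (f k ω)) μ :=
    fun k => (hf k).aemeasurable.ennreal_ofReal
  have hfin : ∫⁻ ω, ∑' k, ENNReal.ofReal (f k ω) ∂μ ≠ ⊤ := by
    rw [lintegral_tsum hmeas]
    refine ne_top_of_le_ne_top (ENNReal.ofReal_ne_top (r := C))
      (ENNReal.tsum_le_of_sum_range_le fun n => ?_)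
    calc ∑ k ∈ range n, ∫⁻ ω, ENNReal.ofReal (f k ω) ∂μ
        = ∑ k ∈ range n, ENNReal.ofReal (∫ ω, f k ω ∂μ) := by
          refine sum_congr rfl fun k _ => ?_
          exact (ofReal_integral_eq_lintegral_ofReal (hf k) (ae_of_all _ (hf0 k))).symm
      _ = ENNReal.ofReal (∑ k ∈ range n, ∫ ω, f k ω ∂μ) :=
          (ENNReal.ofReal_sum_of_nonneg fun k _ => integral_nonneg (hf0 k)).symm
      _ ≤ ENNReal.ofReal C := ENNReal.ofReal_le_ofReal (hC n)
  filter_upwards [ae_lt_top' (AEMeasurable.tsum hmeas) hfin] with ω hω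
  simpa [ENNReal.toReal_ofReal (hf0 _ ω)] using ENNReal.summable_toReal hω.ne

theorem integrable_norm_gradient_sq_comp [IsFiniteMeasure μ] {J : F → ℝ} {L B : ℝ} (hL : 0 < L)
    (hJ : Differentiable ℝ J) (hJL : ∀ x y, ‖gradient J x - gradient J y‖ ≤ L * ‖x - y‖)
    (hJB : ∀ x, |J x| ≤ B) {x : Ω → F} (hx : AEStronglyMeasurable x μ) :
    Integrable (fun ω => ‖gradient J (x ω)‖ ^ 2) μ :=
  .of_bound
    (((lipschitzWith_gradient hL.le hJL).continuous.comp_aestronglyMeasurable hx).norm.pow 2)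
    (8 * L * B)
    (ae_of_all _ fun ω => by simpa using norm_gradient_sq_le_of_abs_le hL hJ hJL hJB (x ω))

theorem le_integral_comp_add_smul [IsProbabilityMeasure μ] (hm : m ≤ mΩ) {J : F → ℝ}
    {L ℓ B : ℝ} (hL : 0 < L) (hJ : Differentiable ℝ J)
    (hJL : ∀ x y, ‖gradient J x - gradient J y‖ ≤ L * ‖x - y‖) (hJB : ∀ x, |J x| ≤ B)
    {x g : Ω → F} (hx : StronglyMeasurable[m] x) (hg : AEStronglyMeasurable g μ)
    (hgℓ : ∀ᵐ ω ∂μ, ‖g ω‖ ≤ ℓ) (hcond : μ[g|m] =ᵐ[μ] fun ω => gradient J (x ω)) (a : ℝ) :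
    ∫ ω, J (x ω) ∂μ + a * ∫ ω, ‖gradient J (x ω)‖ ^ 2 ∂μ - L * ℓ ^ 2 * a ^ 2
      ≤ ∫ ω, J (x ω + a • g ω) ∂μ := by
  set G := fun ω => gradient J (x ω)
  have hGm : StronglyMeasurable[m] G :=
    (lipschitzWith_gradient hL.le hJL).continuous.comp_stronglyMeasurable hx
  have hxμ : AEStronglyMeasurable x μ := (hx.mono hm).aestronglyMeasurable
  have hGbdd : ∀ ω, ‖G ω‖ ≤ √(8 * L * B) := fun ω =>
    Real.le_sqrt_of_sq_le (norm_gradient_sq_le_of_abs_le hL hJ hJL hJB _)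
  have hJx : Integrable (fun ω => J (x ω)) μ :=
    .of_bound (hJ.continuous.comp_aestronglyMeasurable hxμ) B (ae_of_all _ fun _ => hJB _)
  have hJy : Integrable (fun ω => J (x ω + a • g ω)) μ :=
    .of_bound (hJ.continuous.comp_aestronglyMeasurable (hxμ.add (hg.const_smul a))) B
      (ae_of_all _ fun _ => hJB _)
  have hGg : Integrable (fun ω => ⟪G ω, g ω⟫) μ := by
    refine .of_bound ((hGm.mono hm).aestronglyMeasurable.inner hg) (√(8 * L * B) * ℓ) ?_
    filter_upwards [hgℓ] with ω hω
    exact (norm_inner_le_norm _ _).trans (mul_le_mul (hGbdd ω) hω (norm_nonneg _) (by positivity))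
  have hpointwise : ∀ᵐ ω ∂μ,
      J (x ω) + a * ⟪G ω, g ω⟫ - L * ℓ ^ 2 * a ^ 2 ≤ J (x ω + a • g ω) := by
    filter_upwards [hgℓ] with ω hω
    exact le_comp_add_smul_of_norm_le hL.le hJ hJL (x ω) hω a
  calc ∫ ω, J (x ω) ∂μ + a * ∫ ω, ‖G ω‖ ^ 2 ∂μ - L * ℓ ^ 2 * a ^ 2
      = ∫ ω, (J (x ω) + a * ⟪G ω, g ω⟫ - L * ℓ ^ 2 * a ^ 2) ∂μ := by
        rw [integral_sub ?_ (integrable_const _), integral_add hJx (hGg.const_mul a),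
          integral_const_mul,
          integral_inner_eq_integral_norm_sq_of_condExp_eq hm hGm hGg (.of_bound hg ℓ hgℓ) hcond]
        · simp
        · exact hJx.add (hGg.const_mul a)
    _ ≤ ∫ ω, J (x ω + a • g ω) ∂μ :=
        integral_mono_ae ((hJx.add (hGg.const_mul a)).sub (integrable_const _)) hJy hpointwise

theorem ae_summable_mul_norm_sq_gradient [IsProbabilityMeasure μ] (ℱ : Filtration ℕ mΩ)
    {J : F → ℝ} {L ℓ B : ℝ} (hL : 0 < L) (hJ : Differentiable ℝ J)
    (hJL : ∀ x y, ‖gradient J x - gradient J y‖ ≤ L * ‖x - y‖) (hJB : ∀ x, |J x| ≤ B)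
    {θ g : ℕ → Ω → F} (hθ : StronglyAdapted ℱ θ) (hg : ∀ k, AEStronglyMeasurable (g k) μ)
    {α : ℕ → ℝ} (hupdate : ∀ k ω, θ (k + 1) ω = θ k ω + α k • g k ω)
    (hunbiased : ∀ k, μ[g k | ℱ k] =ᵐ[μ] fun ω => gradient J (θ k ω))
    (hgℓ : ∀ k, ∀ᵐ ω ∂μ, ‖g k ω‖ ≤ ℓ) (hα : ∀ k, 0 ≤ α k) (hαsq : Summable fun k => α k ^ 2) :
    ∀ᵐ ω ∂μ, Summable fun k => α k * ‖gradient J (θ k ω)‖ ^ 2 := by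
  set e : ℕ → ℝ := fun k => ∫ ω, J (θ k ω) ∂μ
  have he : ∀ k, |e k| ≤ B := fun k => by
    simpa using norm_integral_le_of_norm_le_const (μ := μ)
      (ae_of_all _ fun ω => (Real.norm_eq_abs _).trans_le (hJB (θ k ω)))
  have hascent : ∀ k, α k * ∫ ω, ‖gradient J (θ k ω)‖ ^ 2 ∂μ - L * ℓ ^ 2 * α k ^ 2
      ≤ e (k + 1) - e k := fun k => by
    have := le_integral_comp_add_smul (ℱ.le k) hL hJ hJL hJB (hθ k) (hg k) (hgℓ k)
      (hunbiased k) (α k)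
    simp only [e, hupdate]
    linarith
  refine ae_summable_of_sum_integral_le (fun k ω => mul_nonneg (hα k) (sq_nonneg _))
    (fun k => (integrable_norm_gradient_sq_comp hL hJ hJL hJB
      ((hθ k).mono (ℱ.le k)).aestronglyMeasurable).const_mul _)
    (C := 2 * B + L * ℓ ^ 2 * ∑' k, α k ^ 2) fun n => ?_
  calc ∑ k ∈ range n, ∫ ω, α k * ‖gradient J (θ k ω)‖ ^ 2 ∂μ
      ≤ ∑ k ∈ range n, (e (k + 1) - e k + L * ℓ ^ 2 * α k ^ 2) :=
        sum_le_sum fun k _ => by rw [integral_const_mul]; linarith [hascent k]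
    _ = e n - e 0 + L * ℓ ^ 2 * ∑ k ∈ range n, α k ^ 2 := by
        rw [sum_add_distrib, sum_range_sub, mul_sum]
    _ ≤ 2 * B + L * ℓ ^ 2 * ∑' k, α k ^ 2 := by
        gcongr ?_ + L * ℓ ^ 2 * ?_
        · linarith [(abs_le.1 (he n)).2, (abs_le.1 (he 0)).1]
        · exact hαsq.sum_le_tsum _ fun k _ => sq_nonneg _

end Stochastic

theorem rpg_as_convergence_to_stationary_points_general
    {d : ℕ}
    {Ω : Type*} {mΩ : MeasurableSpace Ω} {μ : Measure Ω} [IsProbabilityMeasure μ]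
    (ℱ : Filtration ℕ mΩ)
    (L ℓ B : ℝ) (hL : 0 < L) (hℓ : 0 < ℓ)
    (J : EuclideanSpace ℝ (Fin d) → ℝ)
    (hJdiff : Differentiable ℝ J)
    (hJLip : ∀ x y : EuclideanSpace ℝ (Fin d),
      ‖gradient J x - gradient J y‖ ≤ L * ‖x - y‖)
    (hJbdd : ∀ x, |J x| ≤ B)
    (θ g : ℕ → Ω → EuclideanSpace ℝ (Fin d))
    (hθadapted : StronglyAdapted ℱ θ)
    (hgmeas : ∀ k, StronglyMeasurable[ℱ (k + 1)] (g k))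
    (α : ℕ → ℝ)
    (hupdate : ∀ k ω, θ (k + 1) ω = θ k ω + α k • g k ω)
    (hunbiased : ∀ k, μ[g k | ℱ k] =ᵐ[μ] fun ω => gradient J (θ k ω))
    (hgbdd : ∀ k, ∀ᵐ ω ∂μ, ‖g k ω‖ ≤ ℓ)
    (hαpos : ∀ k, 0 < α k)
    (hαdiv : Tendsto (fun n => ∑ k ∈ Finset.range n, α k) atTop atTop)
    (hαsq : Summable fun k => (α k) ^ 2) :
    ∀ᵐ ω ∂μ,
      Tendsto (fun k => ‖gradient J (θ k ω)‖) atTop (𝓝 0) ∧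
      ∀ x : EuclideanSpace ℝ (Fin d),
        MapClusterPt x atTop (fun k => θ k ω) → gradient J x = 0 := by
  filter_upwards [ae_summable_mul_norm_sq_gradient ℱ hL hJdiff hJLip hJbdd hθadapted
    (fun k => ((hgmeas k).mono (ℱ.le _)).aestronglyMeasurable) hupdate hunbiased hgbdd
    (fun k => (hαpos k).le) hαsq, ae_all_iff.2 hgbdd] with ω hsum hgω
  have hconv : Tendsto (fun k => ‖gradient J (θ k ω)‖) atTop (𝓝 0) := by
    refine tendsto_zero_of_summable_mul_sq (C := L * ℓ) (by positivity) (fun k => norm_nonneg _)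
      (fun k => (hαpos k).le) hαdiv hsum fun k => ?_
    calc |‖gradient J (θ (k + 1) ω)‖ - ‖gradient J (θ k ω)‖|
        ≤ L * ‖θ (k + 1) ω - θ k ω‖ := (abs_norm_sub_norm_le _ _).trans (hJLip _ _)
      _ = L * (α k * ‖g k ω‖) := by
          rw [hupdate, add_sub_cancel_left, norm_smul, Real.norm_of_nonneg (hαpos k).le]
      _ ≤ L * ℓ * α k := by
          rw [mul_comm (α k), ← mul_assoc]
          gcongr
          exacts [(hαpos k).le, hgω k]
  refine ⟨hconv, fun x hx => eq_of_mapClusterPt_of_tendsto ?_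
    (tendsto_zero_iff_norm_tendsto_zero.2 hconv)⟩
  exact hx.continuousAt_comp (lipschitzWith_gradient hL.le hJLip).continuous.continuousAt

/-- In the abstract stochastic gradient ascent setting, if `J` is bounded and
the stepsizes satisfy the Robbins–Monro conditions, then `‖∇J(θ_k)‖ → 0` almost surely, and
every almost-sure limit point of the iterates is a stationary point of `J`. -/
theorem rpg_as_convergence_to_stationary_points
    {d : ℕ} (hd : 1 ≤ d)
    {Ω : Type*} {mΩ : MeasurableSpace Ω} {μ : Measure Ω} [IsProbabilityMeasure μ]
    (ℱ : Filtration ℕ mΩ)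
    (L ℓ B : ℝ) (hL : 0 < L) (hℓ : 0 < ℓ)
    (J : EuclideanSpace ℝ (Fin d) → ℝ)
    (hJdiff : Differentiable ℝ J)
    (hJLip : ∀ x y : EuclideanSpace ℝ (Fin d),
      ‖gradient J x - gradient J y‖ ≤ L * ‖x - y‖)
    (hJbdd : ∀ x, |J x| ≤ B)
    (θ g : ℕ → Ω → EuclideanSpace ℝ (Fin d))
    (x₀ : EuclideanSpace ℝ (Fin d)) (hθ0 : θ 0 = fun _ => x₀)
    (hθadapted : StronglyAdapted ℱ θ)
    (hgmeas : ∀ k, StronglyMeasurable[ℱ (k + 1)] (g k))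
    (α : ℕ → ℝ)
    (hupdate : ∀ k ω, θ (k + 1) ω = θ k ω + α k • g k ω)
    (hunbiased : ∀ k, μ[g k | ℱ k] =ᵐ[μ] fun ω => gradient J (θ k ω))
    (hgbdd : ∀ k, ∀ᵐ ω ∂μ, ‖g k ω‖ ≤ ℓ)
    (hαpos : ∀ k, 0 < α k)
    (hαdiv : Tendsto (fun n => ∑ k ∈ Finset.range n, α k) atTop atTop)
    (hαsq : Summable fun k => (α k) ^ 2) :
    ∀ᵐ ω ∂μ,
      Tendsto (fun k => ‖gradient J (θ k ω)‖) atTop (𝓝 0) ∧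
      ∀ x : EuclideanSpace ℝ (Fin d),
        MapClusterPt x atTop (fun k => θ k ω) → gradient J x = 0 :=
  rpg_as_convergence_to_stationary_points_general ℱ L ℓ B hL hℓ J hJdiff hJLip hJbdd θ g hθadapted
    hgmeas α hupdate hunbiased hgbdd hαpos hαdiv hαsq
end

section
/- In the abstract stochastic gradient ascent setting, assume additionally that |J(θ)| ≤ B for all θ, run the iteration from k = 1 with θ_1 deterministic, and take the diminishing stepsizes α_k = k^{−a} for some a ∈ (0,1). Then for every k ≥ 1, (1/k) ∑_{m=1}^k E‖∇J(θ_m)‖² ≤ (2B + Lℓ²/(1−a)) · k^{−min{a, 1−a}}. In particular, with a = 1/2 the averaged expected squared gradient norm decays at rate k^{−1/2}, so the number of iterations needed to make min_{1≤m≤k} E‖∇J(θ_m)‖² ≤ ε is at most O(ε^{−2}). -/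
set_option maxHeartbeats 1000000

open MeasureTheory Filter Topology

lemma descent_aux {d : ℕ} {L : ℝ} (hL : 0 ≤ L) (J : EuclideanSpace ℝ (Fin d) → ℝ)
    (hJdiff : Differentiable ℝ J)
    (hJLip : ∀ x y : EuclideanSpace ℝ (Fin d),
      ‖gradient J x - gradient J y‖ ≤ L * ‖x - y‖)
    (x v : EuclideanSpace ℝ (Fin d)) :
    J x + inner ℝ (gradient J x) v - L / 2 * ‖v‖ ^ 2 ≤ J (x + v) := by
  have hgc : Continuous (gradient J) := by
    have : LipschitzWith (Real.toNNReal L) (gradient J) := by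
      apply LipschitzWith.of_dist_le_mul
      intro p q
      rw [dist_eq_norm, dist_eq_norm]
      simpa [Real.coe_toNNReal L hL] using hJLip p q
    exact this.continuous
  have key : ∀ t : ℝ, HasDerivAt (fun t : ℝ => J (x + t • v))
      (inner ℝ (gradient J (x + t • v)) v : ℝ) t := by
    intro t
    have hc : HasDerivAt (fun t : ℝ => x + t • v) v t := by
      simpa using ((hasDerivAt_id t).smul_const v).const_add x
    have hF := (hJdiff (x + t • v)).hasGradientAt.hasFDerivAt
    have := hF.comp_hasDerivAt t hc
    rw [← InnerProductSpace.toDual_apply_apply]; exact this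
  have hcont : Continuous fun t : ℝ => (inner ℝ (gradient J (x + t • v)) v : ℝ) := by
    apply Continuous.inner
    · exact hgc.comp (by continuity)
    · exact continuous_const
  have hFTC : J (x + v) - J x = ∫ t in (0:ℝ)..1, (inner ℝ (gradient J (x + t • v)) v : ℝ) := by
    have := intervalIntegral.integral_eq_sub_of_hasDerivAt (f := fun t : ℝ => J (x + t • v))
      (fun t _ => key t) (hcont.intervalIntegrable 0 1)
    simpa using this.symm
  have hmono : ∫ t in (0:ℝ)..1, ((inner ℝ (gradient J x) v : ℝ) - L * ‖v‖ ^ 2 * t)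
      ≤ ∫ t in (0:ℝ)..1, (inner ℝ (gradient J (x + t • v)) v : ℝ) := by
    apply intervalIntegral.integral_mono_on (by norm_num)
    · exact ((continuous_const.sub (continuous_const.mul continuous_id)).intervalIntegrable 0 1)
    · exact hcont.intervalIntegrable 0 1
    · intro t ht
      have h1 : ‖gradient J (x + t • v) - gradient J x‖ ≤ L * (t * ‖v‖) := by
        have := hJLip (x + t • v) x
        simpa [norm_smul, abs_of_nonneg ht.1] using this
      have h2 : |(inner ℝ (gradient J (x + t • v) - gradient J x) v : ℝ)| ≤ L * (t * ‖v‖) * ‖v‖ :=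
        le_trans (abs_real_inner_le_norm _ _) (by
          have : (0:ℝ) ≤ ‖v‖ := norm_nonneg _
          nlinarith)
      have h3 : (inner ℝ (gradient J (x + t • v)) v : ℝ) - inner ℝ (gradient J x) v
          = inner ℝ (gradient J (x + t • v) - gradient J x) v := by
        rw [inner_sub_left]
      nlinarith [abs_le.1 h2]
  have hval : ∫ t in (0:ℝ)..1, ((inner ℝ (gradient J x) v : ℝ) - L * ‖v‖ ^ 2 * t)
      = (inner ℝ (gradient J x) v : ℝ) - L / 2 * ‖v‖ ^ 2 := by
    rw [intervalIntegral.integral_sub (g := fun t : ℝ => L * ‖v‖ ^ 2 * t) intervalIntegrable_const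
      (((continuous_const (y := L * ‖v‖ ^ 2)).mul continuous_id').intervalIntegrable 0 1),
      intervalIntegral.integral_const_mul]
    simp [integral_id]
    ring
  linarith [hFTC, hmono, hval]


lemma abs_coord_le_norm {d : ℕ} (x : EuclideanSpace ℝ (Fin d)) (i : Fin d) : |x i| ≤ ‖x‖ := by
  rw [EuclideanSpace.norm_eq, ← Real.sqrt_sq (abs_nonneg (x i))]
  apply Real.sqrt_le_sqrt
  rw [sq_abs]
  calc x i ^ 2 = ‖x i‖ ^ 2 := by rw [Real.norm_eq_abs, sq_abs]
    _ ≤ ∑ j, ‖x j‖ ^ 2 := Finset.single_le_sum (fun j _ => sq_nonneg ‖x j‖) (Finset.mem_univ i)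

lemma integral_inner_condexp
    {Ω : Type*} {m m0 : MeasurableSpace Ω} (hm : m ≤ m0) {μ : Measure Ω}
    [IsProbabilityMeasure μ] {d : ℕ}
    {h g p : Ω → EuclideanSpace ℝ (Fin d)}
    (hh : StronglyMeasurable[m] h) (hgm : AEStronglyMeasurable g μ)
    {C D : ℝ} (hhb : ∀ᵐ ω ∂μ, ‖h ω‖ ≤ C) (hgb : ∀ᵐ ω ∂μ, ‖g ω‖ ≤ D)
    (hcond : μ[g|m] =ᵐ[μ] p) :
    ∫ ω, (inner ℝ (h ω) (g ω) : ℝ) ∂μ = ∫ ω, (inner ℝ (h ω) (p ω) : ℝ) ∂μ := by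
  haveI : SigmaFinite (μ.trim hm) := by infer_instance
  have hg_int : Integrable g μ := (integrable_const D).mono' hgm hgb
  have hp_int : Integrable p μ := integrable_condExp.congr hcond
  have hh_aesm : AEStronglyMeasurable h μ := (hh.mono hm).aestronglyMeasurable
  have hhi : ∀ i : Fin d, StronglyMeasurable[m] (fun ω => h ω i) := fun i =>
    (EuclideanSpace.proj (𝕜 := ℝ) i).continuous.comp_stronglyMeasurable hh
  have hgi_int : ∀ i : Fin d, Integrable (fun ω => g ω i) μ := fun i =>
    (EuclideanSpace.proj (𝕜 := ℝ) i).integrable_comp hg_int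
  have hpi_int : ∀ i : Fin d, Integrable (fun ω => p ω i) μ := fun i =>
    (EuclideanSpace.proj (𝕜 := ℝ) i).integrable_comp hp_int
  have hgib : ∀ i : Fin d, ∀ᵐ ω ∂μ, |g ω i| ≤ D := by
    intro i
    filter_upwards [hgb] with ω hω
    exact le_trans (abs_coord_le_norm _ i) hω
  have hDnn : 0 ≤ D := by
    by_contra hcon
    push_neg at hcon
    have hfalse : ∀ᵐ ω ∂μ, False := by
      filter_upwards [hgb] with ω hω
      exact absurd (le_trans (norm_nonneg _) hω) (not_le.2 hcon)
    have h0 : μ = 0 := by simpa using hfalse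
    exact (IsProbabilityMeasure.ne_zero μ) h0
  -- coordinate condexp identification
  have hpi_eq : ∀ i : Fin d, μ[(fun ω => g ω i)|m] =ᵐ[μ] fun ω => p ω i := by
    intro i
    symm
    refine ae_eq_condExp_of_forall_setIntegral_eq hm (hgi_int i)
      (fun s _ _ => (hpi_int i).integrableOn) (fun s hs hμs => ?_) ?_
    · calc ∫ ω in s, p ω i ∂μ
          = (EuclideanSpace.proj (𝕜 := ℝ) i) (∫ ω in s, p ω ∂μ) :=
            (EuclideanSpace.proj (𝕜 := ℝ) i).integral_comp_comm hp_int.integrableOn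
        _ = (EuclideanSpace.proj (𝕜 := ℝ) i) (∫ ω in s, (μ[g|m]) ω ∂μ) := by
            rw [integral_congr_ae (ae_restrict_of_ae hcond)]
        _ = (EuclideanSpace.proj (𝕜 := ℝ) i) (∫ ω in s, g ω ∂μ) := by
            rw [setIntegral_condExp hm hg_int hs]
        _ = ∫ ω in s, g ω i ∂μ :=
            ((EuclideanSpace.proj (𝕜 := ℝ) i).integral_comp_comm hg_int.integrableOn).symm
    · refine ⟨fun ω => (μ[g|m]) ω i,
        (EuclideanSpace.proj (𝕜 := ℝ) i).continuous.comp_stronglyMeasurable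
          stronglyMeasurable_condExp, ?_⟩
      filter_upwards [hcond] with ω hω
      rw [hω]
  have hpib : ∀ i : Fin d, ∀ᵐ ω ∂μ, |p ω i| ≤ D := by
    intro i
    have h1 := ae_bdd_condExp_of_ae_bdd (m := m) (μ := μ) (R := D.toNNReal)
      (f := fun ω => g ω i) (by
        filter_upwards [hgib i] with ω hω
        simpa [Real.coe_toNNReal D hDnn] using hω)
    filter_upwards [h1, hpi_eq i] with ω hω he
    rw [← he]
    simpa [Real.coe_toNNReal D hDnn] using hω
  have hpb : ∀ᵐ ω ∂μ, ‖p ω‖ ≤ Real.sqrt (d * D ^ 2) := by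
    have hall : ∀ᵐ ω ∂μ, ∀ i : Fin d, |p ω i| ≤ D := by
      rw [MeasureTheory.ae_all_iff]; exact hpib
    filter_upwards [hall] with ω hω
    rw [EuclideanSpace.norm_eq]
    apply Real.sqrt_le_sqrt
    calc ∑ j, ‖p ω j‖ ^ 2 ≤ ∑ _j : Fin d, D ^ 2 := by
          refine Finset.sum_le_sum fun j _ => ?_
          rw [Real.norm_eq_abs]
          exact pow_le_pow_left₀ (abs_nonneg _) (hω j) 2
      _ = d * D ^ 2 := by simp
  -- product integrability for any coordinatewise D'-bounded q
  have hmul_int : ∀ (q : Ω → EuclideanSpace ℝ (Fin d)) (D' : ℝ), AEStronglyMeasurable q μ →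
      (∀ᵐ ω ∂μ, ‖q ω‖ ≤ D') → ∀ i : Fin d, Integrable (fun ω => h ω i * q ω i) μ := by
    intro q D' hqm hqb i
    refine (integrable_const (C * D')).mono'
      ((((hhi i).mono hm).aestronglyMeasurable).mul
        ((EuclideanSpace.proj (𝕜 := ℝ) i).continuous.comp_aestronglyMeasurable hqm)) ?_
    filter_upwards [hhb, hqb] with ω h1 h2
    have hq : |q ω i| ≤ D' := le_trans (abs_coord_le_norm _ i) h2
    have hh' : |h ω i| ≤ C := le_trans (abs_coord_le_norm _ i) h1
    rw [Real.norm_eq_abs, abs_mul]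
    exact mul_le_mul hh' hq (abs_nonneg _) (le_trans (abs_nonneg _) hh')
  -- per-coordinate integral identity
  have key : ∀ i : Fin d, ∫ ω, h ω i * g ω i ∂μ = ∫ ω, h ω i * p ω i ∂μ := by
    intro i
    have h1 : Integrable (fun ω => h ω i * g ω i) μ := hmul_int g D hgm hgb i
    have hmulpull := condExp_mul_of_stronglyMeasurable_left (μ := μ) (hhi i) h1 (hgi_int i)
    calc ∫ ω, h ω i * g ω i ∂μ
        = ∫ ω, (μ[(fun ω => h ω i * g ω i)|m]) ω ∂μ := (integral_condExp hm).symm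
      _ = ∫ ω, h ω i * (μ[(fun ω => g ω i)|m]) ω ∂μ := by
          refine integral_congr_ae ?_
          filter_upwards [hmulpull] with ω hω
          exact hω
      _ = ∫ ω, h ω i * p ω i ∂μ := by
          refine integral_congr_ae ?_
          filter_upwards [hpi_eq i] with ω hω
          rw [hω]
  -- assemble
  have expand : ∀ (q : Ω → EuclideanSpace ℝ (Fin d)) (D' : ℝ), AEStronglyMeasurable q μ →
      (∀ᵐ ω ∂μ, ‖q ω‖ ≤ D') →
      ∫ ω, (inner ℝ (h ω) (q ω) : ℝ) ∂μ = ∑ i : Fin d, ∫ ω, h ω i * q ω i ∂μ := by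
    intro q D' hqm hqb
    rw [← integral_finset_sum _ (fun i _ => hmul_int q D' hqm hqb i)]
    refine integral_congr_ae (Eventually.of_forall fun ω => ?_)
    show (inner ℝ (h ω) (q ω) : ℝ) = ∑ i : Fin d, h ω i * q ω i
    rw [PiLp.inner_apply]
    simp [RCLike.inner_apply]
    exact Finset.sum_congr rfl fun i _ => mul_comm _ _
  rw [expand g D hgm hgb, expand p (Real.sqrt (d * D ^ 2)) hp_int.aestronglyMeasurable hpb]
  exact Finset.sum_congr rfl fun i _ => key i


lemma sum_rpow_neg_le {a : ℝ} (ha1 : 0 < a) (ha2 : a < 1) :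
    ∀ k : ℕ, 1 ≤ k → ∑ m ∈ Finset.Icc 1 k, (m : ℝ) ^ (-a) ≤ (k : ℝ) ^ (1 - a) / (1 - a) := by
  intro k hk
  induction k, hk using Nat.le_induction with
  | base =>
    simp only [Finset.Icc_self, Finset.sum_singleton, Nat.cast_one, Real.one_rpow]
    rw [le_div_iff₀ (by linarith)]
    linarith
  | succ n hn ih =>
    rw [Finset.sum_Icc_succ_top (by omega : 1 ≤ n + 1)]
    have hn1 : (1:ℝ) ≤ (n:ℝ) := by exact_mod_cast hn
    have hkey : ((n:ℝ) + 1) ^ (-a) ≤ (((n:ℝ) + 1) ^ (1 - a) - (n:ℝ) ^ (1 - a)) / (1 - a) := by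
      have hint : ∫ x in (n:ℝ)..((n:ℝ)+1), x ^ (-a) =
          (((n:ℝ)+1) ^ (-a + 1) - (n:ℝ) ^ (-a + 1)) / (-a + 1) :=
        integral_rpow (Or.inl (by linarith))
      have hii : IntervalIntegrable (fun x : ℝ => x ^ (-a)) MeasureTheory.volume (n:ℝ) ((n:ℝ)+1) :=
        intervalIntegral.intervalIntegrable_rpow (Or.inr (by
          rw [Set.mem_uIcc]
          push_neg
          constructor <;> intro h <;> [linarith; linarith]))
      have hlb : ((n:ℝ) + 1) ^ (-a) ≤ ∫ x in (n:ℝ)..((n:ℝ)+1), x ^ (-a) := by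
        have hconst : ∫ _x in (n:ℝ)..((n:ℝ)+1), ((n:ℝ) + 1) ^ (-a) = ((n:ℝ) + 1) ^ (-a) := by
          rw [intervalIntegral.integral_const]
          simp
        rw [← hconst]
        apply intervalIntegral.integral_mono_on (by linarith) (intervalIntegrable_const) hii
        intro x hx
        exact Real.rpow_le_rpow_of_nonpos (by linarith [hx.1]) hx.2 (by linarith)
      calc ((n:ℝ) + 1) ^ (-a) ≤ (((n:ℝ)+1) ^ (-a + 1) - (n:ℝ) ^ (-a + 1)) / (-a + 1) := by
            rw [← hint]; exact hlb
        _ = (((n:ℝ) + 1) ^ (1 - a) - (n:ℝ) ^ (1 - a)) / (1 - a) := by ring_nf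
    push_cast
    calc (∑ m ∈ Finset.Icc 1 n, (m : ℝ) ^ (-a)) + ((n:ℝ) + 1) ^ (-a)
        ≤ (n:ℝ) ^ (1 - a) / (1 - a) + (((n:ℝ) + 1) ^ (1 - a) - (n:ℝ) ^ (1 - a)) / (1 - a) := by
          exact add_le_add ih hkey
      _ = ((n:ℝ) + 1) ^ (1 - a) / (1 - a) := by ring



/-- Convergence rate of the RPG iteration with diminishing stepsizes
`α_k = k^{-a}`: the averaged expected squared gradient norm decays like `k^{-min{a,1-a}}`. -/
theorem rpg_rate_diminishing_stepsize
    {d : ℕ} (hd : 1 ≤ d)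
    {Ω : Type*} {mΩ : MeasurableSpace Ω} {μ : Measure Ω} [IsProbabilityMeasure μ]
    (ℱ : Filtration ℕ mΩ)
    (L ℓ B : ℝ) (hL : 0 < L) (hℓ : 0 < ℓ)
    (J : EuclideanSpace ℝ (Fin d) → ℝ)
    (hJdiff : Differentiable ℝ J)
    (hJLip : ∀ x y : EuclideanSpace ℝ (Fin d),
      ‖gradient J x - gradient J y‖ ≤ L * ‖x - y‖)
    (hJbdd : ∀ x, |J x| ≤ B)
    (θ g : ℕ → Ω → EuclideanSpace ℝ (Fin d))
    (x₁ : EuclideanSpace ℝ (Fin d)) (hθ1 : θ 1 = fun _ => x₁)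
    (hθadapted : StronglyAdapted ℱ θ)
    (hgmeas : ∀ k, StronglyMeasurable[ℱ (k + 1)] (g k))
    (a : ℝ) (ha : a ∈ Set.Ioo (0 : ℝ) 1)
    (α : ℕ → ℝ) (hα : ∀ k : ℕ, 1 ≤ k → α k = (k : ℝ) ^ (-a))
    (hupdate : ∀ k : ℕ, 1 ≤ k → ∀ ω, θ (k + 1) ω = θ k ω + α k • g k ω)
    (hunbiased : ∀ k, μ[g k | ℱ k] =ᵐ[μ] fun ω => gradient J (θ k ω))
    (hgbdd : ∀ k, ∀ᵐ ω ∂μ, ‖g k ω‖ ≤ ℓ) :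
    ∀ k : ℕ, 1 ≤ k →
      (1 / (k : ℝ)) * ∑ m ∈ Finset.Icc 1 k, ∫ ω, ‖gradient J (θ m ω)‖ ^ 2 ∂μ ≤
        (2 * B + L * ℓ ^ 2 / (1 - a)) * (k : ℝ) ^ (-(min a (1 - a))) := by
  obtain ⟨ha1, ha2⟩ := ha
  have hJc : Continuous J := hJdiff.continuous
  have hgc : Continuous (gradient J) := by
    have : LipschitzWith (Real.toNNReal L) (gradient J) := by
      apply LipschitzWith.of_dist_le_mul
      intro p q
      rw [dist_eq_norm, dist_eq_norm]
      simpa [Real.coe_toNNReal L hL.le] using hJLip p q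
    exact this.continuous
  have hBnn : 0 ≤ B := le_trans (abs_nonneg _) (hJbdd 0)
  have hθmeas : ∀ m, AEStronglyMeasurable (θ m) μ := fun m =>
    ((hθadapted m).mono (ℱ.le m)).aestronglyMeasurable
  set EJ : ℕ → ℝ := fun m => ∫ ω, J (θ m ω) ∂μ with hEJ
  set Q : ℕ → ℝ := fun m => ∫ ω, ‖gradient J (θ m ω)‖ ^ 2 ∂μ with hQdef
  have hJint : ∀ n, Integrable (fun ω => J (θ n ω)) μ := fun n =>
    (integrable_const B).mono' (hJc.comp_aestronglyMeasurable (hθmeas n))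
      (Eventually.of_forall fun ω => by simpa [Real.norm_eq_abs] using hJbdd (θ n ω))
  have hEJb : ∀ n, |EJ n| ≤ B := by
    intro n
    calc |EJ n| ≤ ∫ ω, |J (θ n ω)| ∂μ := by
          simpa [Real.norm_eq_abs] using
            norm_integral_le_integral_norm (μ := μ) (f := fun ω => J (θ n ω))
      _ ≤ ∫ _ω, B ∂μ := integral_mono (hJint n).abs (integrable_const B)
          (fun ω => hJbdd (θ n ω))
      _ = B := by simp
  -- a.e. boundedness of the iterates
  have hθbdd : ∀ m, 1 ≤ m → ∃ C : ℝ, 0 ≤ C ∧ ∀ᵐ ω ∂μ, ‖θ m ω‖ ≤ C := by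
    intro m hm
    induction m, hm using Nat.le_induction with
    | base => exact ⟨‖x₁‖, norm_nonneg _, Eventually.of_forall fun ω => by rw [hθ1]⟩
    | succ n hn ih =>
      obtain ⟨C, hC0, hC⟩ := ih
      refine ⟨C + ℓ, by linarith, ?_⟩
      filter_upwards [hC, hgbdd n] with ω h1 h2
      rw [hupdate n hn ω]
      have hαn : 0 ≤ α n ∧ α n ≤ 1 := by
        rw [hα n hn]
        constructor
        · exact Real.rpow_nonneg (Nat.cast_nonneg n) _
        · exact Real.rpow_le_one_of_one_le_of_nonpos (by exact_mod_cast hn) (by linarith)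
      calc ‖θ n ω + α n • g n ω‖ ≤ ‖θ n ω‖ + ‖α n • g n ω‖ := norm_add_le _ _
        _ ≤ C + ℓ := by
            rw [norm_smul, Real.norm_eq_abs, abs_of_nonneg hαn.1]
            have : α n * ‖g n ω‖ ≤ 1 * ℓ :=
              mul_le_mul hαn.2 h2 (norm_nonneg _) zero_le_one
            linarith
  -- the key per-step inequality
  have hstep : ∀ m, 1 ≤ m →
      Q m ≤ (m:ℝ) ^ a * (EJ (m+1) - EJ m) + L * ℓ ^ 2 / 2 * (m:ℝ) ^ (-a) := by
    intro m hm
    obtain ⟨C, hC0, hCb⟩ := hθbdd m hm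
    set D : ℝ := ‖gradient J 0‖ + L * C with hD
    have hpb : ∀ᵐ ω ∂μ, ‖gradient J (θ m ω)‖ ≤ D := by
      filter_upwards [hCb] with ω hω
      have h1 := hJLip (θ m ω) 0
      rw [sub_zero] at h1
      have h2 : ‖gradient J (θ m ω)‖ ≤ ‖gradient J (θ m ω) - gradient J 0‖ + ‖gradient J 0‖ := by
        simpa using norm_add_le (gradient J (θ m ω) - gradient J 0) (gradient J 0)
      have h3 : L * ‖θ m ω‖ ≤ L * C := mul_le_mul_of_nonneg_left hω hL.le
      rw [hD]; linarith
    have hp_sm : StronglyMeasurable[ℱ m] (fun ω => gradient J (θ m ω)) :=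
      hgc.comp_stronglyMeasurable (hθadapted m)
    have hp_aesm : AEStronglyMeasurable (fun ω => gradient J (θ m ω)) μ :=
      (hp_sm.mono (ℱ.le m)).aestronglyMeasurable
    have hg_aesm : AEStronglyMeasurable (g m) μ :=
      ((hgmeas m).mono (ℱ.le (m+1))).aestronglyMeasurable
    have tower : ∫ ω, (inner ℝ (gradient J (θ m ω)) (g m ω) : ℝ) ∂μ
        = ∫ ω, (inner ℝ (gradient J (θ m ω)) (gradient J (θ m ω)) : ℝ) ∂μ :=
      integral_inner_condexp (ℱ.le m) hp_sm hg_aesm hpb (hgbdd m) (hunbiased m)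
    have hQm : ∫ ω, (inner ℝ (gradient J (θ m ω)) (gradient J (θ m ω)) : ℝ) ∂μ = Q m := by
      rw [hQdef]
      refine integral_congr_ae (Eventually.of_forall fun ω => ?_)
      exact real_inner_self_eq_norm_sq _
    have hinner_int : Integrable (fun ω => (inner ℝ (gradient J (θ m ω)) (g m ω) : ℝ)) μ := by
      refine (integrable_const (D * ℓ)).mono' (hp_aesm.inner hg_aesm) ?_
      filter_upwards [hpb, hgbdd m] with ω h1 h2
      rw [Real.norm_eq_abs]
      exact le_trans (abs_real_inner_le_norm _ _)
        (mul_le_mul h1 h2 (norm_nonneg _) (le_trans (norm_nonneg _) h1))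
    -- pointwise descent inequality
    have hptw : ∀ᵐ ω ∂μ, J (θ m ω) + α m * (inner ℝ (gradient J (θ m ω)) (g m ω) : ℝ)
        - L / 2 * (α m ^ 2 * ℓ ^ 2) ≤ J (θ (m+1) ω) := by
      filter_upwards [hgbdd m] with ω hgω
      have hdes := descent_aux hL.le J hJdiff hJLip (θ m ω) (α m • g m ω)
      rw [hupdate m hm ω]
      rw [real_inner_smul_right] at hdes
      have hnorm : ‖α m • g m ω‖ ^ 2 ≤ α m ^ 2 * ℓ ^ 2 := by
        rw [norm_smul, Real.norm_eq_abs, mul_pow, sq_abs]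
        have : ‖g m ω‖ ^ 2 ≤ ℓ ^ 2 := pow_le_pow_left₀ (norm_nonneg _) hgω 2
        nlinarith [sq_nonneg (α m)]
      nlinarith
    -- integrate
    have hmul_int' : Integrable (fun ω => α m * (inner ℝ (gradient J (θ m ω)) (g m ω) : ℝ)) μ :=
      hinner_int.const_mul (α m)
    have hadd_int : Integrable (fun ω => J (θ m ω)
        + α m * (inner ℝ (gradient J (θ m ω)) (g m ω) : ℝ)) μ := (hJint m).add hmul_int'
    have hlhs_int : Integrable (fun ω => J (θ m ω)
        + α m * (inner ℝ (gradient J (θ m ω)) (g m ω) : ℝ) - L / 2 * (α m ^ 2 * ℓ ^ 2)) μ :=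
      hadd_int.sub (integrable_const _)
    have hmono := integral_mono_ae hlhs_int (hJint (m+1)) hptw
    rw [integral_sub hadd_int (integrable_const _),
      integral_add (hJint m) hmul_int', integral_const_mul,
      integral_const] at hmono
    simp only [measure_univ, probReal_univ, ENNReal.toReal_one, smul_eq_mul, one_mul] at hmono
    rw [tower, hQm] at hmono
    -- manipulate with α m = m ^ (-a)
    have hmpos : (0:ℝ) < (m:ℝ) := by exact_mod_cast hm
    have hαm : α m = (m:ℝ) ^ (-a) := hα m hm
    have hprod : (m:ℝ) ^ a * α m = 1 := by
      rw [hαm, ← Real.rpow_add hmpos]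
      simp
    have hs_nonneg : (0:ℝ) ≤ (m:ℝ) ^ a := Real.rpow_nonneg hmpos.le _
    have hineq : α m * Q m ≤ EJ (m+1) - EJ m + L / 2 * (α m ^ 2 * ℓ ^ 2) := by
      change EJ m + α m * Q m - L / 2 * (α m ^ 2 * ℓ ^ 2) ≤ EJ (m+1) at hmono
      linarith
    have hmul := mul_le_mul_of_nonneg_left hineq hs_nonneg
    have e1 : (m:ℝ) ^ a * (α m * Q m) = Q m := by
      rw [← mul_assoc, hprod, one_mul]
    have e2 : (m:ℝ) ^ a * (α m ^ 2 * ℓ ^ 2) = α m * ℓ ^ 2 := by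
      rw [sq]
      calc (m:ℝ) ^ a * (α m * α m * ℓ ^ 2) = ((m:ℝ) ^ a * α m) * (α m * ℓ ^ 2) := by ring
        _ = α m * ℓ ^ 2 := by rw [hprod, one_mul]
    rw [e1] at hmul
    calc Q m ≤ (m:ℝ) ^ a * (EJ (m+1) - EJ m + L / 2 * (α m ^ 2 * ℓ ^ 2)) := hmul
      _ = (m:ℝ) ^ a * (EJ (m+1) - EJ m) + L / 2 * ((m:ℝ) ^ a * (α m ^ 2 * ℓ ^ 2)) := by ring
      _ = (m:ℝ) ^ a * (EJ (m+1) - EJ m) + L * ℓ ^ 2 / 2 * (m:ℝ) ^ (-a) := by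
          rw [e2, hαm]; ring
  -- Abel-type bound
  have hAbel : ∀ k : ℕ, 1 ≤ k →
      ∑ m ∈ Finset.Icc 1 k, (m:ℝ) ^ a * (EJ (m+1) - EJ m) ≤ (k:ℝ) ^ a * (EJ (k+1) + B) := by
    intro k hk
    induction k, hk using Nat.le_induction with
    | base =>
      simp only [Finset.Icc_self, Finset.sum_singleton, Nat.cast_one, Real.one_rpow]
      have := abs_le.1 (hEJb 1)
      linarith
    | succ n hn ih =>
      rw [Finset.sum_Icc_succ_top (by omega : 1 ≤ n + 1)]
      have h1 : (n:ℝ) ^ a ≤ ((n:ℝ) + 1) ^ a :=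
        Real.rpow_le_rpow (Nat.cast_nonneg n) (by linarith) ha1.le
      have h2 : 0 ≤ EJ (n+1) + B := by linarith [(abs_le.1 (hEJb (n+1))).1]
      have h3 : (0:ℝ) ≤ ((n:ℝ) + 1) ^ a := Real.rpow_nonneg (by positivity) _
      push_cast
      nlinarith [ih]
  -- assemble for given k
  intro k hk
  have hk1 : (1:ℝ) ≤ (k:ℝ) := by exact_mod_cast hk
  have hkpos : (0:ℝ) < (k:ℝ) := by linarith
  have hsum : ∑ m ∈ Finset.Icc 1 k, Q m
      ≤ (k:ℝ) ^ a * (2 * B) + L * ℓ ^ 2 / 2 * ((k:ℝ) ^ (1 - a) / (1 - a)) := by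
    calc ∑ m ∈ Finset.Icc 1 k, Q m
        ≤ ∑ m ∈ Finset.Icc 1 k,
            ((m:ℝ) ^ a * (EJ (m+1) - EJ m) + L * ℓ ^ 2 / 2 * (m:ℝ) ^ (-a)) := by
          refine Finset.sum_le_sum fun m hmem => ?_
          exact hstep m (Finset.mem_Icc.1 hmem).1
      _ = (∑ m ∈ Finset.Icc 1 k, (m:ℝ) ^ a * (EJ (m+1) - EJ m))
          + L * ℓ ^ 2 / 2 * ∑ m ∈ Finset.Icc 1 k, (m:ℝ) ^ (-a) := by
          rw [Finset.sum_add_distrib, Finset.mul_sum]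
      _ ≤ (k:ℝ) ^ a * (EJ (k+1) + B) + L * ℓ ^ 2 / 2 * ((k:ℝ) ^ (1 - a) / (1 - a)) := by
          have hS := sum_rpow_neg_le ha1 ha2 k hk
          have hcoef : (0:ℝ) ≤ L * ℓ ^ 2 / 2 := by positivity
          exact add_le_add (hAbel k hk) (mul_le_mul_of_nonneg_left hS hcoef)
      _ ≤ (k:ℝ) ^ a * (2 * B) + L * ℓ ^ 2 / 2 * ((k:ℝ) ^ (1 - a) / (1 - a)) := by
          have h2 : EJ (k+1) + B ≤ 2 * B := by linarith [(abs_le.1 (hEJb (k+1))).2]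
          have h3 : (0:ℝ) ≤ (k:ℝ) ^ a := Real.rpow_nonneg hkpos.le _
          nlinarith
  -- final numeric manipulation
  have hmin1 : -(1 - a) ≤ -(min a (1 - a)) := by
    have := min_le_right a (1 - a); linarith
  have hmin2 : -a ≤ -(min a (1 - a)) := by
    have := min_le_left a (1 - a); linarith
  have m1 : (k:ℝ) ^ (a - 1) ≤ (k:ℝ) ^ (-(min a (1 - a))) :=
    Real.rpow_le_rpow_of_exponent_le hk1 (by linarith)
  have m2 : (k:ℝ) ^ (-a) ≤ (k:ℝ) ^ (-(min a (1 - a))) :=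
    Real.rpow_le_rpow_of_exponent_le hk1 hmin2
  have e1 : (1 / (k:ℝ)) * (k:ℝ) ^ a = (k:ℝ) ^ (a - 1) := by
    rw [Real.rpow_sub hkpos, Real.rpow_one]
    ring
  have hkne : (k:ℝ) ≠ 0 := ne_of_gt hkpos
  have e2 : (1 / (k:ℝ)) * (k:ℝ) ^ (1 - a) = (k:ℝ) ^ (-a) := by
    rw [Real.rpow_sub hkpos, Real.rpow_one, Real.rpow_neg hkpos.le]
    field_simp
  have hknn : (0:ℝ) ≤ 1 / (k:ℝ) := by positivity
  calc (1 / (k:ℝ)) * ∑ m ∈ Finset.Icc 1 k, Q m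
      ≤ (1 / (k:ℝ)) * ((k:ℝ) ^ a * (2 * B) + L * ℓ ^ 2 / 2 * ((k:ℝ) ^ (1 - a) / (1 - a))) :=
        mul_le_mul_of_nonneg_left hsum hknn
    _ = 2 * B * ((1 / (k:ℝ)) * (k:ℝ) ^ a)
        + L * ℓ ^ 2 / (2 * (1 - a)) * ((1 / (k:ℝ)) * (k:ℝ) ^ (1 - a)) := by
        have hne : (1:ℝ) - a ≠ 0 := by linarith
        field_simp
    _ = 2 * B * (k:ℝ) ^ (a - 1) + L * ℓ ^ 2 / (2 * (1 - a)) * (k:ℝ) ^ (-a) := by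
        rw [e1, e2]
    _ ≤ 2 * B * (k:ℝ) ^ (-(min a (1 - a))) + L * ℓ ^ 2 / (1 - a) * (k:ℝ) ^ (-(min a (1 - a))) := by
        have c1 : 2 * B * (k:ℝ) ^ (a - 1) ≤ 2 * B * (k:ℝ) ^ (-(min a (1 - a))) :=
          mul_le_mul_of_nonneg_left m1 (by linarith)
        have h1a : (0:ℝ) < 1 - a := by linarith
        have hc2 : (0:ℝ) ≤ L * ℓ ^ 2 / (2 * (1 - a)) := by positivity
        have c2 : L * ℓ ^ 2 / (2 * (1 - a)) * (k:ℝ) ^ (-a)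
            ≤ L * ℓ ^ 2 / (2 * (1 - a)) * (k:ℝ) ^ (-(min a (1 - a))) :=
          mul_le_mul_of_nonneg_left m2 hc2
        have c3 : L * ℓ ^ 2 / (2 * (1 - a)) * (k:ℝ) ^ (-(min a (1 - a)))
            ≤ L * ℓ ^ 2 / (1 - a) * (k:ℝ) ^ (-(min a (1 - a))) := by
          have hrn : (0:ℝ) ≤ (k:ℝ) ^ (-(min a (1 - a))) := Real.rpow_nonneg hkpos.le _
          have hpos : (0:ℝ) < L * ℓ ^ 2 * (1 - a) := by positivity
          have : L * ℓ ^ 2 / (2 * (1 - a)) ≤ L * ℓ ^ 2 / (1 - a) := by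
            rw [div_le_div_iff₀ (by linarith) (by linarith)]
            nlinarith
          exact mul_le_mul_of_nonneg_right this hrn
        linarith
    _ = (2 * B + L * ℓ ^ 2 / (1 - a)) * (k:ℝ) ^ (-(min a (1 - a))) := by ring
end

section
/- In the abstract stochastic gradient ascent setting, assume additionally that the stepsizes satisfy ∑_{j=0}^∞ α_j² < ∞. Then for every k, E[J(θ_{k+1}) | F_k] ≥ J(θ_k) + α_k ‖∇J(θ_k)‖² − L α_k² ℓ² almost surely; moreover, the process W_k := J(θ_k) − L ℓ² ∑_{j=k}^∞ α_j² satisfies E[W_{k+1} | F_k] ≥ W_k + α_k ‖∇J(θ_k)‖² almost surely, so that (W_k) is a submartingale with respect to (F_k). -/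
open MeasureTheory Filter Topology
open RealInnerProductSpace

lemma descent_lemma {E : Type*} [NormedAddCommGroup E] [InnerProductSpace ℝ E] [CompleteSpace E]
    (L : ℝ) (hL : 0 ≤ L) (J : E → ℝ) (hJdiff : Differentiable ℝ J)
    (hJLip : ∀ x y : E, ‖gradient J x - gradient J y‖ ≤ L * ‖x - y‖)
    (x v : E) :
    J x + ⟪gradient J x, v⟫ - L * ‖v‖ ^ 2 ≤ J (x + v) := by
  set ψ : ℝ → ℝ := fun t => J (x + t • v) - ⟪gradient J x, v⟫ * t with hψ
  have hderiv : ∀ t : ℝ, HasDerivAt ψ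
      (⟪gradient J (x + t • v), v⟫ - ⟪gradient J x, v⟫) t := by
    intro t
    have hline : HasDerivAt (fun t : ℝ => x + t • v) v t := by
      simpa using ((hasDerivAt_id t).smul_const v).const_add x
    have hF := ((hJdiff (x + t • v)).hasGradientAt.hasFDerivAt).comp_hasDerivAt t hline
    have h1 : HasDerivAt (fun t : ℝ => J (x + t • v)) ⟪gradient J (x + t • v), v⟫ t := by
      rw [Function.comp_def] at hF
      exact hF.congr_deriv (by simp [InnerProductSpace.toDual_apply_apply])
    exact h1.sub ((hasDerivAt_id t).const_mul ⟪gradient J x, v⟫ |>.congr_deriv (by ring))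

  have hbound : ∀ t ∈ Set.Icc (0:ℝ) 1,
      ‖⟪gradient J (x + t • v), v⟫ - ⟪gradient J x, v⟫‖ ≤ L * ‖v‖ ^ 2 := by
    intro t ht
    rw [← inner_sub_left]
    calc ‖⟪gradient J (x + t • v) - gradient J x, v⟫‖
        ≤ ‖gradient J (x + t • v) - gradient J x‖ * ‖v‖ := by
          simpa using abs_real_inner_le_norm (gradient J (x + t • v) - gradient J x) v
      _ ≤ (L * ‖t • v‖) * ‖v‖ := by
          apply mul_le_mul_of_nonneg_right _ (norm_nonneg v)
          simpa using hJLip (x + t • v) x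
      _ ≤ L * ‖v‖ ^ 2 := by
          rw [norm_smul]
          have h1 : ‖t‖ ≤ 1 := by rw [Real.norm_eq_abs, abs_of_nonneg ht.1]; exact ht.2
          have h2 : ‖t‖ * ‖v‖ ≤ ‖v‖ := mul_le_of_le_one_left (norm_nonneg v) h1
          calc L * (‖t‖ * ‖v‖) * ‖v‖ ≤ L * ‖v‖ * ‖v‖ :=
                mul_le_mul_of_nonneg_right (mul_le_mul_of_nonneg_left h2 hL) (norm_nonneg v)
            _ = L * ‖v‖ ^ 2 := by ring
  have key := Convex.norm_image_sub_le_of_norm_hasDerivWithin_le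
    (fun t ht => (hderiv t).hasDerivWithinAt) hbound (convex_Icc (0:ℝ) 1)
    (Set.left_mem_Icc.2 zero_le_one) (Set.right_mem_Icc.2 zero_le_one)
  have h01 : ψ 1 - ψ 0 ≥ -(L * ‖v‖ ^ 2) := by
    have := abs_le.1 (by simpa using key)
    linarith [this.1]
  have e1 : ψ 1 = J (x + v) - ⟪gradient J x, v⟫ := by simp [hψ]
  have e0 : ψ 0 = J x := by simp [hψ]
  rw [e1, e0] at h01
  linarith

lemma condexp_inner_const {Ω : Type*} {m mΩ : MeasurableSpace Ω} (hm : m ≤ mΩ)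
    {μ : Measure Ω} [IsFiniteMeasure μ]
    {E : Type*} [NormedAddCommGroup E] [InnerProductSpace ℝ E] [CompleteSpace E]
    (f : Ω → E) (hf : Integrable f μ) (c : E) :
    (μ[fun ω => ⟪c, f ω⟫ | m]) =ᵐ[μ] fun ω => ⟪c, (μ[f | m]) ω⟫ := by
  have hT : ∀ {h : Ω → E}, Integrable h μ → Integrable (fun ω => ⟪c, h ω⟫) μ := by
    intro h hh
    simpa using (innerSL ℝ c).integrable_comp hh
  refine (ae_eq_condExp_of_forall_setIntegral_eq hm (hT hf)
    (fun s hs _ => ((hT integrable_condExp).integrableOn))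
    (fun s hs hμs => ?_)
    (((innerSL ℝ c).continuous.comp_stronglyMeasurable
      stronglyMeasurable_condExp).aestronglyMeasurable)).symm
  have h1 : ∫ ω in s, ⟪c, (μ[f|m]) ω⟫ ∂μ = ⟪c, ∫ ω in s, (μ[f|m]) ω ∂μ⟫ := by
    simpa using (innerSL ℝ c).integral_comp_comm (integrable_condExp.integrableOn (s := s))
  have h2 : ∫ ω in s, ⟪c, f ω⟫ ∂μ = ⟪c, ∫ ω in s, f ω ∂μ⟫ := by
    simpa using (innerSL ℝ c).integral_comp_comm (hf.integrableOn (s := s))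
  rw [h1, h2, setIntegral_condExp hm hf hs]

/-- Stochastic ascent property and submartingale property of
`W_k = J(θ_k) − Lℓ² ∑_{j≥k} α_j²` for the RPG iteration. -/
theorem rpg_submartingale_property
    {d : ℕ} (hd : 1 ≤ d)
    {Ω : Type*} {mΩ : MeasurableSpace Ω} {μ : Measure Ω} [IsProbabilityMeasure μ]
    (ℱ : Filtration ℕ mΩ)
    (L ℓ B : ℝ) (hL : 0 < L) (hℓ : 0 < ℓ)
    (J : EuclideanSpace ℝ (Fin d) → ℝ)
    (hJdiff : Differentiable ℝ J)
    (hJLip : ∀ x y : EuclideanSpace ℝ (Fin d),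
      ‖gradient J x - gradient J y‖ ≤ L * ‖x - y‖)
    (hJbdd : ∀ x, |J x| ≤ B)
    (θ g : ℕ → Ω → EuclideanSpace ℝ (Fin d))
    (x₀ : EuclideanSpace ℝ (Fin d)) (hθ0 : θ 0 = fun _ => x₀)
    (hθadapted : Adapted ℱ θ)
    (hgmeas : ∀ k, StronglyMeasurable[ℱ (k + 1)] (g k))
    (α : ℕ → ℝ) (hαpos : ∀ k, 0 ≤ α k)
    (hαsq : Summable fun k => (α k) ^ 2)
    (hupdate : ∀ k ω, θ (k + 1) ω = θ k ω + α k • g k ω)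
    (hunbiased : ∀ k, μ[g k | ℱ k] =ᵐ[μ] fun ω => gradient J (θ k ω))
    (hgbdd : ∀ k, ∀ᵐ ω ∂μ, ‖g k ω‖ ≤ ℓ) :
    (∀ k, ∀ᵐ ω ∂μ,
        J (θ k ω) + α k * ‖gradient J (θ k ω)‖ ^ 2 - L * (α k) ^ 2 * ℓ ^ 2 ≤
          (μ[fun ω' => J (θ (k + 1) ω') | ℱ k]) ω) ∧
    (∀ k, ∀ᵐ ω ∂μ,
        (fun ω' => J (θ k ω') - L * ℓ ^ 2 * ∑' j : ℕ, (α (k + j)) ^ 2) ω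
            + α k * ‖gradient J (θ k ω)‖ ^ 2 ≤
          (μ[fun ω' => J (θ (k + 1) ω') - L * ℓ ^ 2 * ∑' j : ℕ, (α (k + 1 + j)) ^ 2 | ℱ k]) ω) ∧
    Submartingale
      (fun k ω => J (θ k ω) - L * ℓ ^ 2 * ∑' j : ℕ, (α (k + j)) ^ 2) ℱ μ := by
  have hm : ∀ n, ℱ n ≤ mΩ := fun n => ℱ.le n
  -- continuity of the gradient
  have hgradcont : Continuous (gradient J) := by
    have : LipschitzWith L.toNNReal (gradient J) := by
      apply LipschitzWith.of_dist_le_mul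
      intro x y
      rw [dist_eq_norm, dist_eq_norm]
      simpa [Real.coe_toNNReal L hL.le] using hJLip x y
    exact this.continuous
  -- basic measurability/integrability facts
  have hJθmeas : ∀ k, StronglyMeasurable[ℱ k] fun ω => J (θ k ω) := fun k =>
    hJdiff.continuous.comp_stronglyMeasurable (hθadapted k).stronglyMeasurable
  have hJθint : ∀ k, Integrable (fun ω => J (θ k ω)) μ := by
    intro k
    refine Integrable.mono' (integrable_const B)
      (((hJθmeas k).mono (hm k)).aestronglyMeasurable) ?_
    filter_upwards with ω using by simpa [Real.norm_eq_abs] using hJbdd (θ k ω)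
  have humeas : ∀ k, StronglyMeasurable[ℱ k] fun ω => gradient J (θ k ω) := fun k =>
    hgradcont.comp_stronglyMeasurable (hθadapted k).stronglyMeasurable
  have hgmeas' : ∀ k, AEStronglyMeasurable (g k) μ := fun k =>
    ((hgmeas k).mono (hm (k + 1))).aestronglyMeasurable
  have hgint : ∀ k, Integrable (g k) μ := fun k =>
    Integrable.mono' (integrable_const ℓ) (hgmeas' k) (hgbdd k)
  -- coordinates
  have hcoordbd : ∀ k i, ∀ᵐ ω ∂μ, |g k ω i| ≤ ℓ := by
    intro k i
    filter_upwards [hgbdd k] with ω hω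
    have h1 : |g k ω i| = |⟪EuclideanSpace.single i (1:ℝ), g k ω⟫| := by
      simp [EuclideanSpace.inner_single_left]
    have h2 := abs_real_inner_le_norm (EuclideanSpace.single i (1:ℝ)) (g k ω)
    rw [h1]
    calc |⟪EuclideanSpace.single i (1:ℝ), g k ω⟫|
        ≤ ‖EuclideanSpace.single i (1:ℝ)‖ * ‖g k ω‖ := h2
      _ = ‖g k ω‖ := by simp [EuclideanSpace.norm_single]
      _ ≤ ℓ := hω
  have hcoord : ∀ k i,
      (μ[fun ω => g k ω i | ℱ k]) =ᵐ[μ] fun ω => gradient J (θ k ω) i := by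
    intro k i
    have h1 := condexp_inner_const (hm k) (g k) (hgint k) (EuclideanSpace.single i (1:ℝ))
    have h2 : (fun ω => ⟪EuclideanSpace.single i (1:ℝ), (μ[g k | ℱ k]) ω⟫)
        =ᵐ[μ] fun ω => gradient J (θ k ω) i := by
      filter_upwards [hunbiased k] with ω hω
      rw [hω, EuclideanSpace.inner_single_left]
      simp
    have h3 : (fun ω => ⟪EuclideanSpace.single i (1:ℝ), g k ω⟫) = fun ω => g k ω i := by
      funext ω; simp [EuclideanSpace.inner_single_left]
    rw [h3] at h1
    exact h1.trans h2
  have hgi_int : ∀ k i, Integrable (fun ω => g k ω i) μ := by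
    intro k i
    refine Integrable.mono' (integrable_const ℓ) ?_ ?_
    · exact ((EuclideanSpace.proj i : EuclideanSpace ℝ (Fin d) →L[ℝ] ℝ).continuous.comp_aestronglyMeasurable
        (hgmeas' k))
    · filter_upwards [hcoordbd k i] with ω hω using by simpa [Real.norm_eq_abs] using hω
  have hui_bd : ∀ k i, ∀ᵐ ω ∂μ, |gradient J (θ k ω) i| ≤ ℓ := by
    intro k i
    have h1 := ae_bdd_condExp_of_ae_bdd (m := ℱ k) (μ := μ) (R := ℓ.toNNReal)
      (f := fun ω => g k ω i) ?_
    · filter_upwards [h1, hcoord k i] with ω hω1 hω2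
      rw [← hω2]
      simpa [Real.coe_toNNReal ℓ hℓ.le] using hω1
    · filter_upwards [hcoordbd k i] with ω hω using by
        simpa [Real.coe_toNNReal ℓ hℓ.le] using hω
  have hui_meas : ∀ k i, StronglyMeasurable[ℱ k] fun ω => gradient J (θ k ω) i := by
    intro k i
    exact (EuclideanSpace.proj i :
      EuclideanSpace ℝ (Fin d) →L[ℝ] ℝ).continuous.comp_stronglyMeasurable (humeas k)
  have hprod_int : ∀ k i, Integrable (fun ω => gradient J (θ k ω) i * g k ω i) μ := by
    intro k i
    refine Integrable.mono' (integrable_const (ℓ * ℓ)) ?_ ?_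
    · exact (((hui_meas k i).mono (hm k)).aestronglyMeasurable).mul
        ((EuclideanSpace.proj i :
          EuclideanSpace ℝ (Fin d) →L[ℝ] ℝ).continuous.comp_aestronglyMeasurable (hgmeas' k))
    · filter_upwards [hui_bd k i, hcoordbd k i] with ω h1 h2
      rw [Real.norm_eq_abs, abs_mul]
      exact mul_le_mul h1 h2 (abs_nonneg _) hℓ.le
  -- the inner-product expansion
  have hip_eq : ∀ k, (fun ω => ⟪gradient J (θ k ω), g k ω⟫)
      = fun ω => ∑ i, gradient J (θ k ω) i * g k ω i := by
    intro k; funext ω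
    simp only [PiLp.inner_apply, RCLike.inner_apply, conj_trivial]
    exact Finset.sum_congr rfl fun i _ => mul_comm _ _
  have hip_int : ∀ k, Integrable (fun ω => ⟪gradient J (θ k ω), g k ω⟫) μ := by
    intro k
    rw [hip_eq k]
    exact integrable_finset_sum _ fun i _ => hprod_int k i
  have hip_condexp : ∀ k,
      (μ[fun ω => ⟪gradient J (θ k ω), g k ω⟫ | ℱ k])
        =ᵐ[μ] fun ω => ‖gradient J (θ k ω)‖ ^ 2 := by
    intro k
    rw [hip_eq k]
    have heq : (fun ω => ∑ i, gradient J (θ k ω) i * g k ω i)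
        = ∑ i : Fin d, fun ω => gradient J (θ k ω) i * g k ω i := by
      funext ω; simp
    rw [heq]
    have h1 := condExp_finset_sum (μ := μ) (m := ℱ k)
      (f := fun i ω => gradient J (θ k ω) i * g k ω i) (s := Finset.univ)
      (fun i _ => hprod_int k i)
    refine h1.trans ?_
    have h2 : ∀ i : Fin d,
        (μ[fun ω => gradient J (θ k ω) i * g k ω i | ℱ k])
          =ᵐ[μ] fun ω => gradient J (θ k ω) i * gradient J (θ k ω) i := by
      intro i
      have h3 := condExp_mul_of_stronglyMeasurable_left (μ := μ) (hui_meas k i)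
        (hprod_int k i) (hgi_int k i)
      refine h3.trans ?_
      filter_upwards [hcoord k i] with ω hω
      simp only [Pi.mul_apply]
      rw [hω]
    have h4 : ∀ᵐ ω ∂μ, ∀ i : Fin d,
        (μ[fun ω => gradient J (θ k ω) i * g k ω i | ℱ k]) ω
          = gradient J (θ k ω) i * gradient J (θ k ω) i :=
      ae_all_iff.2 fun i => h2 i
    filter_upwards [h4] with ω hω
    simp only [Finset.sum_apply]
    rw [Finset.sum_congr rfl fun i _ => hω i]
    have : ‖gradient J (θ k ω)‖ ^ 2 = ⟪gradient J (θ k ω), gradient J (θ k ω)⟫ :=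
      (real_inner_self_eq_norm_sq _).symm
    rw [this]
    simp only [PiLp.inner_apply, RCLike.inner_apply, conj_trivial]
  -- Part 1
  have key1 : ∀ k, ∀ᵐ ω ∂μ,
      J (θ k ω) + α k * ‖gradient J (θ k ω)‖ ^ 2 - L * (α k) ^ 2 * ℓ ^ 2 ≤
        (μ[fun ω' => J (θ (k + 1) ω') | ℱ k]) ω := by
    intro k
    set A : Ω → ℝ := fun ω =>
      (J (θ k ω) - L * (α k) ^ 2 * ℓ ^ 2) + α k * ⟪gradient J (θ k ω), g k ω⟫ with hA
    have hA1int : Integrable (fun ω => J (θ k ω) - L * (α k) ^ 2 * ℓ ^ 2) μ :=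
      (hJθint k).sub (integrable_const _)
    have hAint : Integrable A μ := hA1int.add ((hip_int k).const_mul _)
    have hAle : A ≤ᵐ[μ] fun ω => J (θ (k + 1) ω) := by
      filter_upwards [hgbdd k] with ω hω
      have hdes := descent_lemma L hL.le J hJdiff hJLip (θ k ω) (α k • g k ω)
      rw [← hupdate k ω] at hdes
      have h5 : ⟪gradient J (θ k ω), α k • g k ω⟫ = α k * ⟪gradient J (θ k ω), g k ω⟫ :=
        real_inner_smul_right _ _ _
      have h6 : ‖α k • g k ω‖ ^ 2 ≤ (α k) ^ 2 * ℓ ^ 2 := by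
        rw [norm_smul, mul_pow, Real.norm_eq_abs, sq_abs]
        have h6a : ‖g k ω‖ ^ 2 ≤ ℓ ^ 2 := by nlinarith [norm_nonneg (g k ω)]
        exact mul_le_mul_of_nonneg_left h6a (sq_nonneg (α k))
      simp only [hA]
      nlinarith [hdes]
    have hstep := condExp_mono (m := ℱ k) hAint (hJθint (k + 1)) hAle
    have hcondA : (μ[A | ℱ k]) =ᵐ[μ] fun ω =>
        (J (θ k ω) - L * (α k) ^ 2 * ℓ ^ 2) + α k * ‖gradient J (θ k ω)‖ ^ 2 := by
      have h7 : A = (fun ω => J (θ k ω) - L * (α k) ^ 2 * ℓ ^ 2)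
          + (α k) • fun ω => ⟪gradient J (θ k ω), g k ω⟫ := by
        funext ω; simp [hA]
      rw [h7]
      refine (condExp_add hA1int ((hip_int k).smul _) _).trans ?_
      have h8 : (μ[fun ω => J (θ k ω) - L * (α k) ^ 2 * ℓ ^ 2 | ℱ k])
          =ᵐ[μ] fun ω => J (θ k ω) - L * (α k) ^ 2 * ℓ ^ 2 := by
        rw [condExp_of_stronglyMeasurable (hm k)
          (f := fun ω => J (θ k ω) - L * (α k) ^ 2 * ℓ ^ 2)
          (by exact (hJθmeas k).sub stronglyMeasurable_const) hA1int]
      have h9 := (condExp_smul (μ := μ) (m := ℱ k) (α k)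
        (fun ω => ⟪gradient J (θ k ω), g k ω⟫))
      filter_upwards [h8, h9, hip_condexp k] with ω hω8 hω9 hωip
      simp only [Pi.add_apply, Pi.smul_apply, smul_eq_mul] at *
      rw [hω8, hω9, hωip]
    filter_upwards [hstep, hcondA] with ω h1 h2
    rw [h2] at h1
    linarith
  -- tsum shift identity
  have hsummable : ∀ k, Summable fun j => (α (k + j)) ^ 2 := by
    intro k
    have := (summable_nat_add_iff k).2 hαsq
    simpa [add_comm] using this
  have htsum : ∀ k, ∑' j : ℕ, (α (k + j)) ^ 2
      = (α k) ^ 2 + ∑' j : ℕ, (α (k + 1 + j)) ^ 2 := by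
    intro k
    rw [Summable.tsum_eq_zero_add (hsummable k)]
    simp only [add_zero]
    congr 1
    exact tsum_congr fun j => by rw [show k + (j + 1) = k + 1 + j by omega]
  -- Part 2
  have key2 : ∀ k, ∀ᵐ ω ∂μ,
      (J (θ k ω) - L * ℓ ^ 2 * ∑' j : ℕ, (α (k + j)) ^ 2)
          + α k * ‖gradient J (θ k ω)‖ ^ 2 ≤
        (μ[fun ω' => J (θ (k + 1) ω') - L * ℓ ^ 2 * ∑' j : ℕ, (α (k + 1 + j)) ^ 2 | ℱ k]) ω := by
    intro k
    have hsub : (μ[fun ω' => J (θ (k + 1) ω') - L * ℓ ^ 2 * ∑' j : ℕ, (α (k + 1 + j)) ^ 2 | ℱ k])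
        =ᵐ[μ] fun ω => (μ[fun ω' => J (θ (k + 1) ω') | ℱ k]) ω
          - L * ℓ ^ 2 * ∑' j : ℕ, (α (k + 1 + j)) ^ 2 := by
      have := condExp_sub (μ := μ) (m := ℱ k) (hJθint (k + 1))
        (integrable_const (L * ℓ ^ 2 * ∑' j : ℕ, (α (k + 1 + j)) ^ 2))
      refine this.trans (Eventually.of_forall fun ω => ?_)
      simp [condExp_const (hm k)]
    filter_upwards [key1 k, hsub] with ω h1 h2
    have h4 : L * ℓ ^ 2 * ∑' j : ℕ, (α (k + j)) ^ 2
        = L * (α k) ^ 2 * ℓ ^ 2 + L * ℓ ^ 2 * ∑' j : ℕ, (α (k + 1 + j)) ^ 2 := by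
      rw [htsum k]; ring
    rw [h2, h4]
    linarith
  refine ⟨key1, key2, ?_⟩
  refine submartingale_nat ?_ ?_ ?_
  · intro k
    exact (hJθmeas k).sub stronglyMeasurable_const
  · intro k
    exact (hJθint k).sub (integrable_const _)
  · intro k
    refine Eventually.mono (key2 k) fun ω hω => ?_
    dsimp only
    exact le_trans (le_add_of_nonneg_right
      (mul_nonneg (hαpos k) (sq_nonneg ‖gradient J (θ k ω)‖))) hω
end

section
/- Let H be a real symmetric d×d matrix whose largest eigenvalue λ satisfies λ ≥ 0, let v be a unit eigenvector of H with eigenvalue λ, let α, β ≥ 0 and η > 0, and let g be a square-integrable ℝ^d-valued random vector with E[⟨v, g⟩²] ≥ η. Then for every integer p ≥ 0, E‖(I + αH)^p (β g)‖² ≥ η β² (1 + αλ)^{2p}. -/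
/-!
Because `H` is symmetric, so is `S = β • (I + αH)^p`, and `v` is an eigenvector of `S` with
eigenvalue `β(1 + αλ)^p`. Hence `⟪v, S g⟫ = ⟪S v, g⟫ = β(1 + αλ)^p ⟪v, g⟫`, and Cauchy–Schwarz
with `‖v‖ = 1` bounds its square by `‖S g‖²`. Integrating and using `E⟪v, g⟫² ≥ η` gives the claim.
-/

open MeasureTheory Matrix
open scoped RealInnerProductSpace

theorem Module.End.pow_apply_of_apply_eq_smul {R M : Type*} [CommSemiring R] [AddCommMonoid M]
    [Module R M] {f : Module.End R M} {μ : R} {v : M} (h : f v = μ • v) (n : ℕ) :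
    (f ^ n) v = μ ^ n • v := by
  induction n with
  | zero => simp
  | succ n ih => rw [pow_succ, Module.End.mul_apply, h, map_smul, ih, smul_smul, pow_succ']

theorem Matrix.toEuclideanLin_one_add_smul_pow {n : Type*} [Fintype n] [DecidableEq n]
    (H : Matrix n n ℝ) (α : ℝ) (p : ℕ) :
    toEuclideanLin ((1 + α • H) ^ p) = (1 + α • toEuclideanLin H) ^ p := by
  simp only [← coe_toEuclideanCLM_eq_toEuclideanLin, map_pow, map_add, map_one, map_smul,
    ContinuousLinearMap.toLinearMap_pow, ContinuousLinearMap.toLinearMap_add,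
    ContinuousLinearMap.toLinearMap_one, ContinuousLinearMap.toLinearMap_smul]

namespace LinearMap.IsSymmetric

variable {E : Type*} [NormedAddCommGroup E] [InnerProductSpace ℝ E]

theorem sq_mul_inner_le {T : E →ₗ[ℝ] E} (hT : T.IsSymmetric) {v : E} {c : ℝ}
    (hTv : T v = c • v) (x : E) : (c * ⟪v, x⟫) ^ 2 ≤ ‖v‖ ^ 2 * ‖T x‖ ^ 2 :=
  calc (c * ⟪v, x⟫) ^ 2 = |⟪v, T x⟫| ^ 2 := by rw [← hT, hTv, real_inner_smul_left, sq_abs]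
    _ ≤ (‖v‖ * ‖T x‖) ^ 2 := by gcongr; exact abs_real_inner_le_norm v (T x)
    _ = ‖v‖ ^ 2 * ‖T x‖ ^ 2 := mul_pow _ _ _

theorem sq_mul_integral_inner_sq_le {Ω : Type*} {mΩ : MeasurableSpace Ω} {μ : Measure Ω}
    {T : E →L[ℝ] E} (hT : (T : E →ₗ[ℝ] E).IsSymmetric) {v : E} {c : ℝ} (hTv : T v = c • v)
    {g : Ω → E} (hg : MemLp g 2 μ) :
    c ^ 2 * ∫ ω, ⟪v, g ω⟫ ^ 2 ∂μ ≤ ‖v‖ ^ 2 * ∫ ω, ‖T (g ω)‖ ^ 2 ∂μ := by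
  have hinner : Integrable (fun ω => ⟪v, g ω⟫ ^ 2) μ :=
    ((innerSL ℝ v).comp_memLp' hg).integrable_sq
  have hnorm : Integrable (fun ω => ‖T (g ω)‖ ^ 2) μ := (T.comp_memLp' hg).norm.integrable_sq
  rw [← integral_const_mul, ← integral_const_mul]
  refine integral_mono (hinner.const_mul _) (hnorm.const_mul _) fun ω => ?_
  rw [← mul_pow]
  exact hT.sq_mul_inner_le hTv (g ω)

end LinearMap.IsSymmetric

theorem cnc_geometric_growth_general
    {d : ℕ}
    {Ω : Type*} {mΩ : MeasurableSpace Ω} (μ : Measure Ω)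
    (H : Matrix (Fin d) (Fin d) ℝ) (hH : H.IsSymm)
    (lam : ℝ)
    (v : EuclideanSpace ℝ (Fin d)) (hv : ‖v‖ = 1)
    (heig : Matrix.toEuclideanLin H v = lam • v)
    (α β η : ℝ)
    (g : Ω → EuclideanSpace ℝ (Fin d)) (hg : MemLp g 2 μ)
    (hCNC : η ≤ ∫ ω, (inner ℝ v (g ω) : ℝ) ^ 2 ∂μ) :
    ∀ p : ℕ,
      η * β ^ 2 * (1 + α * lam) ^ (2 * p) ≤
        ∫ ω, ‖Matrix.toEuclideanLin ((1 + α • H) ^ p) (β • g ω)‖ ^ 2 ∂μ := by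
  intro p
  set S := β • toEuclideanCLM (𝕜 := ℝ) ((1 + α • H) ^ p)
  have hS_coe : (S : EuclideanSpace ℝ (Fin d) →ₗ[ℝ] EuclideanSpace ℝ (Fin d)) =
      β • (1 + α • toEuclideanLin H) ^ p := by
    rw [ContinuousLinearMap.toLinearMap_smul, coe_toEuclideanCLM_eq_toEuclideanLin,
      toEuclideanLin_one_add_smul_pow]
  have hH_symm : (toEuclideanLin H).IsSymmetric :=
    isSymmetric_toEuclideanLin_iff.mpr (isHermitian_iff_isSymm.mpr hH)
  have hS_symm : (S : EuclideanSpace ℝ (Fin d) →ₗ[ℝ] EuclideanSpace ℝ (Fin d)).IsSymmetric := by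
    rw [hS_coe]
    exact ((LinearMap.IsSymmetric.one.add (hH_symm.smul rfl)).pow p).smul rfl
  have hSv : S v = (β * (1 + α * lam) ^ p) • v := by
    have hstep : (1 + α • toEuclideanLin H) v = (1 + α * lam) • v := by
      simp [heig, add_smul, smul_smul]
    change (S : EuclideanSpace ℝ (Fin d) →ₗ[ℝ] EuclideanSpace ℝ (Fin d)) v = _
    rw [hS_coe, LinearMap.smul_apply, Module.End.pow_apply_of_apply_eq_smul hstep, smul_smul]
  have hS_apply (x : EuclideanSpace ℝ (Fin d)) : S x = toEuclideanLin ((1 + α • H) ^ p) (β • x) :=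
    (map_smul (toEuclideanLin _) β x).symm
  have key := hS_symm.sq_mul_integral_inner_sq_le hSv hg
  simp only [hv, one_pow, one_mul, hS_apply] at key
  calc η * β ^ 2 * (1 + α * lam) ^ (2 * p)
      = (β * (1 + α * lam) ^ p) ^ 2 * η := by ring
    _ ≤ (β * (1 + α * lam) ^ p) ^ 2 * ∫ ω, ⟪v, g ω⟫ ^ 2 ∂μ := by gcongr
    _ ≤ _ := key

/-- Geometric growth of the displacement along the top eigenvector
direction under the correlated negative curvature (CNC) condition:
`E‖(I + αH)^p (βg)‖² ≥ ηβ²(1 + αλ)^{2p}`. -/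
theorem cnc_geometric_growth
    {d : ℕ}
    {Ω : Type*} {mΩ : MeasurableSpace Ω} (μ : Measure Ω) [IsProbabilityMeasure μ]
    (H : Matrix (Fin d) (Fin d) ℝ) (hH : H.IsSymm)
    (lam : ℝ) (hlam : 0 ≤ lam)
    (v : EuclideanSpace ℝ (Fin d)) (hv : ‖v‖ = 1)
    (heig : Matrix.toEuclideanLin H v = lam • v)
    (hmax : ∀ (c : ℝ) (w : EuclideanSpace ℝ (Fin d)),
      w ≠ 0 → Matrix.toEuclideanLin H w = c • w → c ≤ lam)
    (α β η : ℝ) (hα : 0 ≤ α) (hβ : 0 ≤ β) (hη : 0 < η)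
    (g : Ω → EuclideanSpace ℝ (Fin d)) (hg : MemLp g 2 μ)
    (hCNC : η ≤ ∫ ω, (inner ℝ v (g ω) : ℝ) ^ 2 ∂μ) :
    ∀ p : ℕ,
      η * β ^ 2 * (1 + α * lam) ^ (2 * p) ≤
        ∫ ω, ‖Matrix.toEuclideanLin ((1 + α • H) ^ p) (β • g ω)‖ ^ 2 ∂μ :=
  cnc_geometric_growth_general (mΩ := mΩ) μ H hH lam v hv heig α β η g hg hCNC
end

section
/- Let (Y_m)_{m=0}^{M} be integrable real-valued random variables on a probability space with Y_0 = y_0 deterministic and Y_m ≤ J* almost surely for every m, let E_0, …, E_{M−1} be events, and let J_thre > 0 and δ ∈ (0,1]. Suppose that for each m: E[(Y_{m+1} − Y_m) · 1_{E_m}] ≥ J_thre · P(E_m) (sufficient increase on E_m) and E[(Y_{m+1} − Y_m) · 1_{E_m^c}] ≥ −(δ J_thre / 2) · P(E_m^c) (bounded decrease on the complement). If M ≥ 2 (J* − y_0) / (δ J_thre), then (1/M) ∑_{m=0}^{M−1} P(E_m) ≤ δ. -/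
/-! Splitting each expected increment over `E m` and its complement bounds it below by
`J p_m - (δ J / 2)(1 - p_m)` with `p_m = P(E m)`. The increments telescope to
`E[Y_M] - y₀ ≤ J* - y₀ ≤ δ J M / 2`, and solving the resulting linear inequality for
`∑ p_m` gives `∑ p_m ≤ δ M`. -/

open MeasureTheory

namespace MeasureTheory

variable {Ω : Type*} {mΩ : MeasurableSpace Ω} {μ : Measure Ω}

theorem mul_measureReal_add_mul_measureReal_compl_le_integral {f : Ω → ℝ} {s : Set Ω}
    {a b : ℝ} (hf : Integrable f μ) (hs : MeasurableSet s)
    (ha : a * μ.real s ≤ ∫ ω in s, f ω ∂μ) (hb : b * μ.real sᶜ ≤ ∫ ω in sᶜ, f ω ∂μ) :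
    a * μ.real s + b * μ.real sᶜ ≤ ∫ ω, f ω ∂μ := by
  rw [← integral_add_compl hs hf]
  exact add_le_add ha hb

theorem sum_range_integral_sub {Y : ℕ → Ω → ℝ} {M : ℕ}
    (hY : ∀ m ≤ M, Integrable (Y m) μ) :
    ∑ m ∈ Finset.range M, ∫ ω, (Y (m + 1) ω - Y m ω) ∂μ
      = ∫ ω, Y M ω ∂μ - ∫ ω, Y 0 ω ∂μ := by
  rw [← Finset.sum_range_sub fun m => ∫ ω, Y m ω ∂μ]
  refine Finset.sum_congr rfl fun m hm => integral_sub (hY _ ?_) (hY _ ?_) <;>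
    grind

end MeasureTheory

theorem sum_le_mul_of_sum_gain_le {p : ℕ → ℝ} {M : ℕ} {J δ : ℝ} (hJ : 0 < J) (hδ : 0 ≤ δ)
    (hp : ∀ m, 0 ≤ p m)
    (h : ∑ m ∈ Finset.range M, (J * p m - δ * J / 2 * (1 - p m)) ≤ δ * J / 2 * M) :
    ∑ m ∈ Finset.range M, p m ≤ δ * M := by
  have hS : 0 ≤ ∑ m ∈ Finset.range M, p m := Finset.sum_nonneg fun m _ => hp m
  have hgain : ∑ m ∈ Finset.range M, (J * p m - δ * J / 2 * (1 - p m))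
      = (J + δ * J / 2) * ∑ m ∈ Finset.range M, p m - δ * J / 2 * M := by
    simp only [mul_one_sub, Finset.sum_sub_distrib, Finset.sum_const, Finset.card_range,
      ← Finset.mul_sum, nsmul_eq_mul]
    ring
  rw [hgain] at h
  have hJS : J * ∑ m ∈ Finset.range M, p m ≤ J * (δ * M) := by
    nlinarith [mul_nonneg (mul_nonneg hδ hJ.le) hS]
  exact le_of_mul_le_mul_left hJS hJ

/-- Probabilistic combination step: if on each 'bad' event `E_m` the
value increases in expectation by at least `J_thre` (per unit probability), and on the
complement it decreases by at most `δJ_thre/2`, and `M ≥ 2(J* − y₀)/(δJ_thre)`, then the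
average probability of the bad events is at most `δ`. -/
theorem average_bad_event_probability_bound
    {Ω : Type*} {mΩ : MeasurableSpace Ω} (μ : Measure Ω) [IsProbabilityMeasure μ]
    (M : ℕ) (Y : ℕ → Ω → ℝ)
    (hYint : ∀ m ≤ M, Integrable (Y m) μ)
    (y₀ Jstar Jthre δ : ℝ)
    (hY0 : Y 0 = fun _ => y₀)
    (hYbdd : ∀ m ≤ M, ∀ᵐ ω ∂μ, Y m ω ≤ Jstar)
    (E : ℕ → Set Ω) (hEmeas : ∀ m, MeasurableSet (E m))
    (hJthre : 0 < Jthre) (hδ : δ ∈ Set.Ioc (0 : ℝ) 1)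
    (hincrease : ∀ m < M,
      Jthre * (μ (E m)).toReal ≤ ∫ ω in E m, (Y (m + 1) ω - Y m ω) ∂μ)
    (hdecrease : ∀ m < M,
      -(δ * Jthre / 2) * (μ (E m)ᶜ).toReal ≤ ∫ ω in (E m)ᶜ, (Y (m + 1) ω - Y m ω) ∂μ)
    (hM : 2 * (Jstar - y₀) / (δ * Jthre) ≤ (M : ℝ)) :
    (1 / (M : ℝ)) * ∑ m ∈ Finset.range M, (μ (E m)).toReal ≤ δ := by
  have hstep : ∀ m < M, Jthre * μ.real (E m) - δ * Jthre / 2 * (1 - μ.real (E m))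
      ≤ ∫ ω, (Y (m + 1) ω - Y m ω) ∂μ := by
    intro m hm
    have := mul_measureReal_add_mul_measureReal_compl_le_integral
      (f := fun ω => Y (m + 1) ω - Y m ω) ((hYint _ hm).sub (hYint _ hm.le)) (hEmeas m) (hincrease m hm) (hdecrease m hm)
    rw [probReal_compl_eq_one_sub (hEmeas m)] at this
    linarith
  have hEYM : ∫ ω, Y M ω ∂μ ≤ Jstar := by
    simpa using integral_mono_ae (hYint M le_rfl) (integrable_const Jstar) (hYbdd M le_rfl)
  have hgain : ∑ m ∈ Finset.range M,
      (Jthre * μ.real (E m) - δ * Jthre / 2 * (1 - μ.real (E m))) ≤ Jstar - y₀ :=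
    calc _ ≤ ∑ m ∈ Finset.range M, ∫ ω, (Y (m + 1) ω - Y m ω) ∂μ :=
          Finset.sum_le_sum fun m hm => hstep m (Finset.mem_range.mp hm)
      _ = ∫ ω, Y M ω ∂μ - y₀ := by simp [sum_range_integral_sub hYint, hY0]
      _ ≤ Jstar - y₀ := by linarith
  have hbudget : Jstar - y₀ ≤ δ * Jthre / 2 * M := by
    rw [div_le_iff₀ (mul_pos hδ.1 hJthre)] at hM
    linarith
  rw [one_div_mul_eq_div]
  exact div_le_of_le_mul₀ M.cast_nonneg hδ.1.le <| sum_le_mul_of_sum_gain_le hJthre hδ.1.le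
    (fun m => measureReal_nonneg) (hgain.trans hbudget)
end

section
/- Let γ ∈ (0,1) and 0 < L_R ≤ U_R. Let (R_t)_{t∈ℕ} be real-valued random variables on a probability space with L_R ≤ R_t ≤ U_R almost surely for every t, and let T be an ℕ-valued random variable, independent of the σ-algebra generated by (R_t)_{t∈ℕ}, with P(T = t) = (1 − γ^{1/2}) γ^{t/2} for every t ∈ ℕ. Then the random truncated discounted sum Q̂ := ∑_{t=0}^{T} γ^{t/2} R_t has variance bounded below as Var(Q̂) ≥ L_R² · γ³ (1 − γ^{1/2}) / ( (1 − γ^{3/2}) (1 − γ)² ). -/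
/-!
Write `s = √γ` and `c n` for the expected truncated return `E[∑_{t ≤ n} s^t R_t]`. Since the
horizon `T` is independent of the rewards, `E[Q̂] = E[c T]` and `E[Q̂²] ≥ E[(c T)²]`, so
`Var Q̂ ≥ Var (c T)`. The increments `c (n+1) - c n = s^(n+1) E[R_{n+1}] ≥ L_R s^(n+1)` dominate
those of `n ↦ -(L_R s / (1 - s)) s^n`, and a function of `T` with larger increments has larger
variance, as `Var X = E[(X - X')²] / 2` for an independent copy `X'`. Hence
`Var Q̂ ≥ (L_R s / (1 - s))² Var (s^T)`, which for geometric `T` is explicitly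
`L_R² s³ (1 - s) / ((1 - s³)(1 - s²)²)`, and this dominates the claimed bound as `γ³ = s⁶ ≤ s³`.
-/

open MeasureTheory ProbabilityTheory

section Contraction

variable {Ω : Type*} {mΩ : MeasurableSpace Ω} {μ : Measure Ω} [IsProbabilityMeasure μ]

lemma variance_eq_integral_sub_sq_prod_div_two {X : Ω → ℝ} (hX : MemLp X 2 μ) :
    Var[X; μ] = (∫ p, (X p.1 - X p.2) ^ 2 ∂μ.prod μ) / 2 := by
  have hdiff : MemLp (fun p : Ω × Ω => X p.1 + (-X) p.2) 2 (μ.prod μ) :=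
    (hX.comp_fst μ).add (hX.neg.comp_snd μ)
  have hmean : ∫ p, (X p.1 + (-X) p.2) ∂μ.prod μ = 0 := by
    rw [integral_add ((hX.integrable one_le_two).comp_fst μ)
      ((hX.neg.integrable one_le_two).comp_snd μ), integral_fun_fst, integral_fun_snd]
    simp [integral_neg]
  have h := variance_add_prod hX hX.neg
  rw [variance_neg, variance_of_integral_eq_zero hdiff.aemeasurable hmean] at h
  simp only [Pi.neg_apply, ← sub_eq_add_neg] at h
  linarith

lemma variance_le_of_abs_sub_le {X Y : Ω → ℝ} (hX : AEStronglyMeasurable X μ)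
    (hY : MemLp Y 2 μ) (hXY : ∀ ω ω', |X ω - X ω'| ≤ |Y ω - Y ω'|) :
    Var[X; μ] ≤ Var[Y; μ] := by
  by_cases hX2 : MemLp X 2 μ
  · rw [variance_eq_integral_sub_sq_prod_div_two hX2, variance_eq_integral_sub_sq_prod_div_two hY]
    refine div_le_div_of_nonneg_right (integral_mono_of_nonneg
      (.of_forall fun p => sq_nonneg (X p.1 - X p.2)) ?_ (.of_forall fun p => sq_le_sq.2 ?_))
      zero_le_two
    · exact ((hY.comp_fst μ).sub (hY.comp_snd μ)).integrable_sq
    · simpa only [abs_abs] using hXY p.1 p.2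
  · rw [variance_of_not_memLp hX hX2]
    exact variance_nonneg Y μ

lemma abs_sub_le_abs_sub_of_monotone {α : Type*} [LinearOrder α] {f g : α → ℝ}
    (hf : Monotone f) (hfg : ∀ ⦃a b⦄, a ≤ b → f b - f a ≤ g b - g a) (a b : α) :
    |f a - f b| ≤ |g a - g b| := by
  wlog hab : a ≤ b generalizing a b
  · rw [abs_sub_comm, abs_sub_comm (g a)]
    exact this b a (le_of_not_ge hab)
  have h1 := hf hab
  have h2 := hfg hab
  rw [abs_sub_comm, abs_sub_comm (g a), abs_of_nonneg (by linarith), abs_of_nonneg (by linarith)]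
  linarith

end Contraction

section RandomIndex

variable {Ω : Type*} {mΩ : MeasurableSpace Ω} {μ : Measure Ω} {T : Ω → ℕ} {F : ℕ → Ω → ℝ}

lemma measurable_eval_index (hT : Measurable T) (hF : ∀ n, Measurable (F n)) :
    Measurable fun ω => F (T ω) ω :=
  (measurable_from_prod_countable_left (f := fun q : Ω × ℕ => F q.2 q.1) hF).comp
    (measurable_id.prodMk hT)

lemma integral_eval_index (hT : Measurable T) (hF : Integrable (fun ω => F (T ω) ω) μ) :
    ∫ ω, F (T ω) ω ∂μ = ∑' n, ∫ ω in T ⁻¹' {n}, F n ω ∂μ := by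
  have hcover : (⋃ n, T ⁻¹' {n}) = Set.univ := by
    ext ω; simp
  rw [← setIntegral_univ, ← hcover,
    integral_iUnion (fun n => hT (measurableSet_singleton n)) (pairwise_disjoint_fiber T)
      (hcover ▸ hF.integrableOn)]
  refine tsum_congr fun n => setIntegral_congr_fun (hT (measurableSet_singleton n)) ?_
  intro ω (hω : T ω = n)
  simp only [hω]

variable [IsProbabilityMeasure μ]

lemma abs_integral_le_of_ae_abs_le {f : Ω → ℝ} {C : ℝ} (hf : ∀ᵐ ω ∂μ, |f ω| ≤ C) :
    |∫ ω, f ω ∂μ| ≤ C := by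
  simpa using norm_integral_le_of_norm_le_const (f := f) (μ := μ) (C := C)
    (by simpa only [Real.norm_eq_abs])

lemma memLp_eval_index (hT : Measurable T) (hF : ∀ n, Measurable (F n)) {C : ℝ}
    (hFC : ∀ n, ∀ᵐ ω ∂μ, |F n ω| ≤ C) : MemLp (fun ω => F (T ω) ω) 2 μ := by
  refine MemLp.of_bound (measurable_eval_index hT hF).aestronglyMeasurable C ?_
  filter_upwards [ae_all_iff.2 hFC] with ω hω using hω (T ω)

lemma memLp_integral_eval_index (hT : Measurable T) {C : ℝ}
    (hFC : ∀ n, ∀ᵐ ω ∂μ, |F n ω| ≤ C) : MemLp (fun ω => μ[F (T ω)]) 2 μ := by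
  have hmeas : Measurable fun ω => μ[F (T ω)] :=
    (measurable_of_countable fun n => ∫ ω, F n ω ∂μ).comp hT
  exact MemLp.of_bound hmeas.aestronglyMeasurable C
    (.of_forall fun ω => abs_integral_le_of_ae_abs_le (hFC (T ω)))

lemma integral_eval_index_of_indepFun (hT : Measurable T) (hF : ∀ n, Measurable (F n))
    (hind : ∀ n, IndepFun T (F n) μ) {C : ℝ} (hFC : ∀ n, ∀ᵐ ω ∂μ, |F n ω| ≤ C) :
    ∫ ω, F (T ω) ω ∂μ = ∫ ω, μ[F (T ω)] ∂μ := by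
  rw [integral_eval_index hT ((memLp_eval_index hT hF hFC).integrable one_le_two),
    integral_eval_index (F := fun n _ => μ[F n]) hT
      ((memLp_integral_eval_index hT hFC).integrable one_le_two)]
  refine tsum_congr fun n => ?_
  rw [setIntegral_const, smul_eq_mul]
  exact ((IndepFun_iff_Indep _ _ _).1 (hind n)).setIntegral_eq_mul (f := id) hT.comap_le
    (hF n).aemeasurable ⟨{n}, measurableSet_singleton n, rfl⟩ aestronglyMeasurable_id

lemma variance_integral_eval_index_le (hT : Measurable T) (hF : ∀ n, Measurable (F n))
    (hind : ∀ n, IndepFun T (F n) μ) {C : ℝ} (hFC : ∀ n, ∀ᵐ ω ∂μ, |F n ω| ≤ C) :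
    Var[fun ω => μ[F (T ω)]; μ] ≤ Var[fun ω => F (T ω) ω; μ] := by
  have hFC2 : ∀ n, ∀ᵐ ω ∂μ, |F n ω ^ 2| ≤ C ^ 2 := fun n => by
    filter_upwards [hFC n] with ω hω
    rw [abs_pow]
    exact pow_le_pow_left₀ (abs_nonneg _) hω 2
  have hsq : ∀ n, (μ[F n]) ^ 2 ≤ μ[fun ω => F n ω ^ 2] := fun n => by
    have h := variance_nonneg (F n) μ
    rw [variance_eq_sub (memLp_eval_index (T := fun _ => n) measurable_const hF hFC)] at h
    simpa using h
  rw [variance_eq_sub (memLp_integral_eval_index hT hFC),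
    variance_eq_sub (memLp_eval_index hT hF hFC),
    integral_eval_index_of_indepFun hT hF hind hFC]
  gcongr ?_ - _
  calc ∫ ω, (μ[F (T ω)]) ^ 2 ∂μ ≤ ∫ ω, μ[fun ω' => F (T ω) ω' ^ 2] ∂μ := by
        refine integral_mono ?_ ?_ fun ω => hsq (T ω)
        · exact (memLp_integral_eval_index hT hFC).integrable_sq
        · exact (memLp_integral_eval_index hT hFC2).integrable one_le_two
    _ = ∫ ω, F (T ω) ω ^ 2 ∂μ :=
        (integral_eval_index_of_indepFun hT (fun n => (hF n).pow_const 2)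
          (fun n => (hind n).comp measurable_id (measurable_id.pow_const 2)) hFC2).symm

end RandomIndex

section GeometricIndex

variable {Ω : Type*} {mΩ : MeasurableSpace Ω} {μ : Measure Ω} [IsProbabilityMeasure μ]
  {T : Ω → ℕ} {s : ℝ}

lemma integral_pow_of_geometric (hT : Measurable T) (hs0 : 0 ≤ s) (hs1 : s < 1)
    (hTdist : ∀ n : ℕ, μ {ω | T ω = n} = ENNReal.ofReal ((1 - s) * s ^ n))
    {r : ℝ} (hr0 : 0 ≤ r) (hr1 : r ≤ 1) :
    ∫ ω, r ^ T ω ∂μ = (1 - s) / (1 - s * r) := by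
  have hint : Integrable (fun ω => r ^ T ω) μ :=
    .of_bound (measurable_const.pow hT).aestronglyMeasurable 1 (.of_forall fun ω => by
      rw [Real.norm_eq_abs, abs_of_nonneg (by positivity)]
      exact pow_le_one₀ hr0 hr1)
  have hsr : s * r < 1 := lt_of_le_of_lt (mul_le_of_le_one_right hs0 hr1) hs1
  rw [integral_eval_index (F := fun n _ => r ^ n) hT hint]
  calc ∑' n, ∫ _ in T ⁻¹' {n}, r ^ n ∂μ = ∑' n : ℕ, (1 - s) * (s * r) ^ n := by
        refine tsum_congr fun n => ?_
        rw [setIntegral_const, measureReal_def, show T ⁻¹' {n} = {ω | T ω = n} from rfl,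
          hTdist n, ENNReal.toReal_ofReal (mul_nonneg (by linarith) (pow_nonneg hs0 n)),
          smul_eq_mul, mul_pow]
        ring
    _ = (1 - s) / (1 - s * r) := by
        rw [tsum_mul_left, tsum_geometric_of_lt_one (by positivity) hsr, div_eq_mul_inv]

lemma variance_pow_of_geometric (hT : Measurable T) (hs0 : 0 ≤ s) (hs1 : s < 1)
    (hTdist : ∀ n : ℕ, μ {ω | T ω = n} = ENNReal.ofReal ((1 - s) * s ^ n)) :
    Var[fun ω => s ^ T ω; μ] = s * (1 - s) ^ 3 / ((1 - s ^ 3) * (1 - s ^ 2) ^ 2) := by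
  have hs2 : s ^ 2 ≤ 1 := pow_le_one₀ hs0 hs1.le
  have hmem : MemLp (fun ω => s ^ T ω) 2 μ :=
    .of_bound (measurable_const.pow hT).aestronglyMeasurable 1 (.of_forall fun ω => by
      rw [Real.norm_eq_abs, abs_of_nonneg (by positivity)]
      exact pow_le_one₀ hs0 hs1.le)
  have hsq : ((fun ω => s ^ T ω) ^ 2) = fun ω => (s ^ 2) ^ T ω := by
    ext ω; simp only [Pi.pow_apply, ← pow_mul, mul_comm]
  rw [variance_eq_sub hmem, hsq, integral_pow_of_geometric hT hs0 hs1 hTdist (by positivity) hs2,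
    integral_pow_of_geometric hT hs0 hs1 hTdist hs0 hs1.le]
  have h3 : 1 - s ^ 3 ≠ 0 := by have := pow_lt_one₀ hs0 hs1 (n := 3) (by norm_num); linarith
  have h2 : 1 - s ^ 2 ≠ 0 := by have := pow_lt_one₀ hs0 hs1 (n := 2) (by norm_num); linarith
  field_simp
  ring

end GeometricIndex

section DiscountedReturn

variable {Ω : Type*} {mΩ : MeasurableSpace Ω} {μ : Measure Ω} {s : ℝ} {R : ℕ → Ω → ℝ}

def discountedReturn (s : ℝ) (R : ℕ → Ω → ℝ) (n : ℕ) (ω : Ω) : ℝ :=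
  ∑ t ∈ Finset.range (n + 1), s ^ t * R t ω

lemma measurable_discountedReturn (hR : ∀ t, Measurable (R t)) (n : ℕ) :
    Measurable (discountedReturn s R n) :=
  Finset.measurable_sum _ fun t _ => (hR t).const_mul _

lemma abs_discountedReturn_le (hs0 : 0 ≤ s) (hs1 : s < 1) {U : ℝ} {ω : Ω}
    (hR : ∀ t, 0 ≤ R t ω ∧ R t ω ≤ U) (n : ℕ) : |discountedReturn s R n ω| ≤ U / (1 - s) := by
  have hU : 0 ≤ U := (hR 0).1.trans (hR 0).2
  rw [discountedReturn,
    abs_of_nonneg (Finset.sum_nonneg fun t _ => mul_nonneg (pow_nonneg hs0 t) (hR t).1)]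
  calc ∑ t ∈ Finset.range (n + 1), s ^ t * R t ω
      ≤ (∑ t ∈ Finset.range (n + 1), s ^ t) * U := by
        rw [Finset.sum_mul]
        exact Finset.sum_le_sum fun t _ => mul_le_mul_of_nonneg_left (hR t).2 (pow_nonneg hs0 t)
    _ ≤ 1 / (1 - s) * U := by
        refine mul_le_mul_of_nonneg_right ?_ hU
        simpa [← Finset.range_eq_Ico] using
          geom_sum_Ico_le_of_lt_one (m := 0) (n := n + 1) hs0 hs1
    _ = U / (1 - s) := by ring

lemma indepFun_discountedReturn {T : Ω → ℕ}
    (hindep : Indep (MeasurableSpace.comap T inferInstance)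
      (⨆ t : ℕ, MeasurableSpace.comap (R t) inferInstance) μ) (n : ℕ) :
    IndepFun T (discountedReturn s R n) μ := by
  rw [IndepFun_iff_Indep]
  refine indep_of_indep_of_le_right hindep (Measurable.comap_le ?_)
  exact Finset.measurable_sum _ fun t _ =>
    ((comap_measurable (R t)).mono (le_iSup (fun t => MeasurableSpace.comap (R t) _) t)
      le_rfl).const_mul _

lemma integral_discountedReturn_succ (hR : ∀ t, Integrable (R t) μ) (n : ℕ) :
    μ[discountedReturn s R (n + 1)] = μ[discountedReturn s R n] + s ^ (n + 1) * μ[R (n + 1)] := by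
  have hint : ∀ m, Integrable (discountedReturn s R m) μ := fun m =>
    integrable_finsetSum _ fun t _ => (hR t).const_mul _
  have hsplit : discountedReturn s R (n + 1) =
      fun ω => discountedReturn s R n ω + s ^ (n + 1) * R (n + 1) ω := by
    ext ω; exact Finset.sum_range_succ _ (n + 1)
  rw [hsplit, integral_add (hint n) ((hR _).const_mul _), integral_const_mul]

variable [IsProbabilityMeasure μ]

lemma sub_le_integral_discountedReturn_sub (hs0 : 0 ≤ s) (hs1 : s < 1)
    (hR : ∀ t, Integrable (R t) μ) {L : ℝ} (hL : ∀ t, ∀ᵐ ω ∂μ, L ≤ R t ω) {m n : ℕ}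
    (hmn : m ≤ n) :
    L * s / (1 - s) * (s ^ m - s ^ n) ≤ μ[discountedReturn s R n] - μ[discountedReturn s R m] := by
  induction n, hmn using Nat.le_induction with
  | base => simp
  | succ n _ ih =>
    have hstep : L ≤ μ[R (n + 1)] := by
      simpa using integral_mono_ae (integrable_const L) (hR (n + 1)) (hL (n + 1))
    have hs : (1 - s) ≠ 0 := by linarith
    rw [integral_discountedReturn_succ hR n]
    have hsplit : L * s / (1 - s) * (s ^ m - s ^ (n + 1))
        = L * s / (1 - s) * (s ^ m - s ^ n) + s ^ (n + 1) * L := by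
      field_simp; ring
    rw [hsplit]
    nlinarith [pow_nonneg hs0 (n + 1)]

lemma sq_mul_variance_pow_le_variance_integral_discountedReturn {T : Ω → ℕ} (hT : Measurable T)
    (hs0 : 0 ≤ s) (hs1 : s < 1) (hR : ∀ t, Integrable (R t) μ) {L : ℝ} (hL0 : 0 ≤ L)
    (hL : ∀ t, ∀ᵐ ω ∂μ, L ≤ R t ω) {C : ℝ} (hC : ∀ n, ∀ᵐ ω ∂μ, |discountedReturn s R n ω| ≤ C) :
    (L * s / (1 - s)) ^ 2 * Var[fun ω => s ^ T ω; μ] ≤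
      Var[fun ω => μ[discountedReturn s R (T ω)]; μ] := by
  set a := L * s / (1 - s)
  have ha : 0 ≤ a := div_nonneg (mul_nonneg hL0 hs0) (by linarith)
  have hmono : Monotone fun n : ℕ => -(a * s ^ n) := fun m n hmn =>
    neg_le_neg (mul_le_mul_of_nonneg_left (pow_right_anti₀ hs0 hs1.le hmn) ha)
  rw [← variance_const_mul, ← variance_fun_neg]
  refine variance_le_of_abs_sub_le ((measurable_const.pow hT).const_mul a).neg.aestronglyMeasurable
    (memLp_integral_eval_index hT hC) fun ω ω' =>
      abs_sub_le_abs_sub_of_monotone (g := fun n => μ[discountedReturn s R n]) hmono ?_ (T ω) (T ω')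
  intro m n hmn
  have := sub_le_integral_discountedReturn_sub hs0 hs1 hR hL hmn
  linarith

end DiscountedReturn

theorem random_horizon_estimator_variance_lower_bound_general
    {Ω : Type*} {mΩ : MeasurableSpace Ω} (μ : Measure Ω) [IsProbabilityMeasure μ]
    (γ LR UR : ℝ) (hγ : γ ∈ Set.Ioo (0 : ℝ) 1) (hLR : 0 < LR)
    (R : ℕ → Ω → ℝ) (hRmeas : ∀ t, Measurable (R t))
    (hRbdd : ∀ t, ∀ᵐ ω ∂μ, LR ≤ R t ω ∧ R t ω ≤ UR)
    (T : Ω → ℕ) (hTmeas : Measurable T)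
    (hTdist : ∀ t : ℕ, μ {ω | T ω = t} =
      ENNReal.ofReal ((1 - Real.sqrt γ) * Real.sqrt γ ^ t))
    (hindep : Indep (MeasurableSpace.comap T inferInstance)
      (⨆ t : ℕ, MeasurableSpace.comap (R t) inferInstance) μ) :
    LR ^ 2 * γ ^ 3 * (1 - Real.sqrt γ) / ((1 - Real.sqrt γ ^ 3) * (1 - γ) ^ 2) ≤
      variance (fun ω => ∑ t ∈ Finset.range (T ω + 1), Real.sqrt γ ^ t * R t ω) μ := by
  obtain ⟨hγ0, hγ1⟩ := hγ
  set s := Real.sqrt γ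
  have hs0 : 0 < s := Real.sqrt_pos.2 hγ0
  have hs1 : s < 1 := (Real.sqrt_lt' one_pos).2 (by simpa using hγ1)
  have hγs : γ = s ^ 2 := (Real.sq_sqrt hγ0.le).symm
  have h1 : 1 - s ≠ 0 := by linarith
  have h2 : 0 < 1 - s ^ 2 := by nlinarith
  have h3 : 0 < 1 - s ^ 3 := by nlinarith [pow_lt_one₀ hs0.le hs1 (by norm_num : 3 ≠ 0)]
  have hRint : ∀ t, Integrable (R t) μ := fun t =>
    .of_bound (hRmeas t).aestronglyMeasurable UR <| by
      filter_upwards [hRbdd t] with ω hω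
      exact abs_le.2 ⟨by linarith [hω.1], hω.2⟩
  have hFC : ∀ n, ∀ᵐ ω ∂μ, |discountedReturn s R n ω| ≤ UR / (1 - s) := fun n => by
    filter_upwards [ae_all_iff.2 hRbdd] with ω hω
    exact abs_discountedReturn_le hs0.le hs1 (fun t => ⟨hLR.le.trans (hω t).1, (hω t).2⟩) n
  calc LR ^ 2 * γ ^ 3 * (1 - s) / ((1 - s ^ 3) * (1 - γ) ^ 2)
      ≤ LR ^ 2 * s ^ 3 * (1 - s) / ((1 - s ^ 3) * (1 - s ^ 2) ^ 2) := by
        rw [hγs, ← pow_mul]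
        gcongr LR ^ 2 * ?_ * (1 - s) / _
        exact pow_le_pow_of_le_one hs0.le hs1.le (by norm_num : 3 ≤ 2 * 3)
    _ = (LR * s / (1 - s)) ^ 2 * Var[fun ω => s ^ T ω; μ] := by
        rw [variance_pow_of_geometric hTmeas hs0.le hs1 hTdist]
        field_simp
    _ ≤ Var[fun ω => μ[discountedReturn s R (T ω)]; μ] :=
        sq_mul_variance_pow_le_variance_integral_discountedReturn hTmeas hs0.le hs1 hRint hLR.le
          (fun t => (hRbdd t).mono fun _ h => h.1) hFC
    _ ≤ _ := variance_integral_eval_index_le hTmeas (measurable_discountedReturn hRmeas)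
          (indepFun_discountedReturn hindep) hFC

/-- Uniform variance lower bound for the random-horizon Monte-Carlo
estimator when rewards are strictly positive: if `L_R ≤ R_t ≤ U_R` a.s. and
`T ~ Geom(1 − √γ)` is independent of the rewards, then
`Var(∑_{t=0}^T γ^{t/2} R_t) ≥ L_R² γ³ (1 − √γ) / ((1 − γ^{3/2})(1 − γ)²)`. -/
theorem random_horizon_estimator_variance_lower_bound
    {Ω : Type*} {mΩ : MeasurableSpace Ω} (μ : Measure Ω) [IsProbabilityMeasure μ]
    (γ LR UR : ℝ) (hγ : γ ∈ Set.Ioo (0 : ℝ) 1) (hLR : 0 < LR) (hLRUR : LR ≤ UR)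
    (R : ℕ → Ω → ℝ) (hRmeas : ∀ t, Measurable (R t))
    (hRbdd : ∀ t, ∀ᵐ ω ∂μ, LR ≤ R t ω ∧ R t ω ≤ UR)
    (T : Ω → ℕ) (hTmeas : Measurable T)
    (hTdist : ∀ t : ℕ, μ {ω | T ω = t} =
      ENNReal.ofReal ((1 - Real.sqrt γ) * Real.sqrt γ ^ t))
    (hindep : Indep (MeasurableSpace.comap T inferInstance)
      (⨆ t : ℕ, MeasurableSpace.comap (R t) inferInstance) μ) :
    LR ^ 2 * γ ^ 3 * (1 - Real.sqrt γ) / ((1 - Real.sqrt γ ^ 3) * (1 - γ) ^ 2) ≤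
      variance (fun ω => ∑ t ∈ Finset.range (T ω + 1), Real.sqrt γ ^ t * R t ω) μ :=
  random_horizon_estimator_variance_lower_bound_general (mΩ := mΩ) μ γ LR UR hγ hLR R hRmeas hRbdd T
    hTmeas hTdist hindep
end

section
/- Let d ≥ 1, t ≥ 1, and B > 0, and let π_1, …, π_t : ℝ^d → ℝ be everywhere differentiable functions with π_u(θ) > 0 and ‖∇π_u(θ)‖ ≤ B · π_u(θ) for all θ ∈ ℝ^d and u = 1, …, t (i.e. each score function ∇ log π_u is bounded in norm by B). Then for all θ¹, θ² ∈ ℝ^d there exists λ ∈ [0,1] such that, with θ̃ := λθ¹ + (1 − λ)θ², | ∏_{u=1}^t π_u(θ¹) − ∏_{u=1}^t π_u(θ²) | ≤ ‖θ¹ − θ²‖ · t · B · ∏_{u=1}^t π_u(θ̃). -/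
open Finset

/-!
Along the segment from `θ₂` to `θ₁` the mean value theorem bounds the increment of
`∏ π_u` by `‖θ₁ - θ₂‖` times the norm of its derivative at some intermediate point.
By the product rule that derivative is `∑_u (∏_{j ≠ u} π_j) • Dπ_u`, and the score bound
`‖Dπ_u‖ ≤ B π_u` turns each of the `t` summands into at most `B ∏_j π_j`.
-/

variable {E : Type*} [NormedAddCommGroup E] [NormedSpace ℝ E]

theorem norm_fderiv_finsetProd_le {ι : Type*} [DecidableEq ι] {s : Finset ι}
    {f : ι → E → ℝ} {x : E} {B : ℝ} (hf : ∀ i ∈ s, DifferentiableAt ℝ (f i) x)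
    (hf_nonneg : ∀ i ∈ s, 0 ≤ f i x) (hscore : ∀ i ∈ s, ‖fderiv ℝ (f i) x‖ ≤ B * f i x) :
    ‖fderiv ℝ (∏ i ∈ s, f i ·) x‖ ≤ #s * B * ∏ i ∈ s, f i x := by
  rw [fderiv_finsetProd hf]
  calc ‖∑ i ∈ s, (∏ j ∈ s.erase i, f j x) • fderiv ℝ (f i) x‖
      ≤ ∑ i ∈ s, ‖(∏ j ∈ s.erase i, f j x) • fderiv ℝ (f i) x‖ := norm_sum_le _ _
    _ ≤ ∑ _i ∈ s, B * ∏ j ∈ s, f j x := by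
      refine sum_le_sum fun i hi => ?_
      have hrest : 0 ≤ ∏ j ∈ s.erase i, f j x :=
        prod_nonneg fun j hj => hf_nonneg j (mem_of_mem_erase hj)
      calc ‖(∏ j ∈ s.erase i, f j x) • fderiv ℝ (f i) x‖
          = (∏ j ∈ s.erase i, f j x) * ‖fderiv ℝ (f i) x‖ := by
            rw [norm_smul, Real.norm_of_nonneg hrest]
        _ ≤ (∏ j ∈ s.erase i, f j x) * (B * f i x) := by gcongr; exact hscore i hi
        _ = B * ∏ j ∈ s, f j x := by rw [← prod_erase_mul s _ hi]; ring
    _ = #s * B * ∏ i ∈ s, f i x := by rw [sum_const, nsmul_eq_mul, mul_assoc]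

theorem exists_mem_Icc_abs_sub_le_norm_fderiv {f : E → ℝ} (hf : Differentiable ℝ f)
    (x y : E) :
    ∃ l ∈ Set.Icc (0 : ℝ) 1, |f x - f y| ≤ ‖x - y‖ * ‖fderiv ℝ f (l • x + (1 - l) • y)‖ := by
  obtain ⟨z, hz, hmvt⟩ := domain_mvt (fun z _ => (hf z).hasFDerivAt.hasFDerivWithinAt)
    convex_univ (Set.mem_univ y) (Set.mem_univ x)
  rw [segment_eq_image] at hz
  obtain ⟨l, hl, rfl⟩ := hz
  refine ⟨l, hl, ?_⟩
  rw [hmvt, add_comm, mul_comm]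
  exact (fderiv ℝ f _).le_opNorm _ |>.trans' (Real.norm_eq_abs _).ge

theorem product_score_mean_value_bound_general
    {d : ℕ} (t : ℕ) (B : ℝ)
    (π : Fin t → EuclideanSpace ℝ (Fin d) → ℝ)
    (hdiff : ∀ u, Differentiable ℝ (π u))
    (hpos : ∀ u θ, 0 < π u θ)
    (hscore : ∀ u θ, ‖gradient (π u) θ‖ ≤ B * π u θ) :
    ∀ θ₁ θ₂ : EuclideanSpace ℝ (Fin d),
      ∃ l ∈ Set.Icc (0 : ℝ) 1,
        |(∏ u, π u θ₁) - ∏ u, π u θ₂| ≤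
          ‖θ₁ - θ₂‖ * t * B * ∏ u, π u (l • θ₁ + (1 - l) • θ₂) := by
  intro θ₁ θ₂
  have hscore' : ∀ u θ, ‖fderiv ℝ (π u) θ‖ ≤ B * π u θ := fun u θ => by
    simpa [gradient] using hscore u θ
  have hprod : Differentiable ℝ (∏ u, π u ·) := by fun_prop
  obtain ⟨l, hl, hmvt⟩ := exists_mem_Icc_abs_sub_le_norm_fderiv hprod θ₁ θ₂
  refine ⟨l, hl, hmvt.trans ?_⟩
  rw [mul_assoc _ (t : ℝ), mul_assoc _ ((t : ℝ) * B)]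
  gcongr
  simpa using norm_fderiv_finsetProd_le (s := univ) (fun u _ => (hdiff u).differentiableAt)
    (fun u _ => (hpos u _).le) fun u _ => hscore' u _

/-- Mean-value bound on products of positive functions with uniformly
bounded score functions: if each `π_u > 0` is differentiable with `‖∇π_u‖ ≤ B·π_u`, then
for any `θ¹, θ²` there is `λ ∈ [0,1]` with
`|∏ π_u(θ¹) − ∏ π_u(θ²)| ≤ ‖θ¹ − θ²‖ · t · B · ∏ π_u(λθ¹ + (1−λ)θ²)`. -/
theorem product_score_mean_value_bound
    {d : ℕ} (hd : 1 ≤ d) (t : ℕ) (ht : 1 ≤ t) (B : ℝ) (hB : 0 < B)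
    (π : Fin t → EuclideanSpace ℝ (Fin d) → ℝ)
    (hdiff : ∀ u, Differentiable ℝ (π u))
    (hpos : ∀ u θ, 0 < π u θ)
    (hscore : ∀ u θ, ‖gradient (π u) θ‖ ≤ B * π u θ) :
    ∀ θ₁ θ₂ : EuclideanSpace ℝ (Fin d),
      ∃ l ∈ Set.Icc (0 : ℝ) 1,
        |(∏ u, π u θ₁) - ∏ u, π u θ₂| ≤
          ‖θ₁ - θ₂‖ * t * B * ∏ u, π u (l • θ₁ + (1 - l) • θ₂) :=
  product_score_mean_value_bound_general t B π hdiff hpos hscore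
end
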